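/- arXiv:2212.05188 — 8 statements merged into one kernel-verified Lean document; each statement's English description precedes it below -/
import Mathlib

section
/- Let C be a trivially valued field and M a valued field extension of C. Then every finite-dimensional C-vector subspace of M has a separated basis; that is, a basis m_1,...,m_k such that for all c_1,...,c_k in C, v(∑ c_i m_i) = min{v(c_i m_i) : 1 ≤ i ≤ k}. -/
open scoped BigOperators

namespace ResidueFieldDomination

variable {K : Type*} [Field K] {Γ : Type*} [LinearOrderedAddCommGroupWithTop Γ]

/-- The value group of a valued subfield `F` of `K`, as a subset of `Γ`. -/
def valGroup (v : AddValuation K Γ) (F : Subfield K) : Set Γ :=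
  {g | ∃ x ∈ F, x ≠ 0 ∧ v x = g}

/-- `ℓ₁, …, ℓ_k` is a separated tuple over `C`:
`v(∑ cᵢ ℓᵢ) = min v(cᵢ ℓᵢ)` for all `cᵢ ∈ C`. -/
def SepOver (v : AddValuation K Γ) (C : Subfield K) {k : ℕ} (ℓ : Fin k → K) : Prop :=
  ∀ c : Fin k → K, (∀ i, c i ∈ C) →
    v (∑ i, c i * ℓ i) = Finset.univ.inf fun i => v (c i * ℓ i)

/-- The tuple is good over `C`: any two of its values are equal or differ by
an element outside the value group of `C`. -/
def GoodOver (v : AddValuation K Γ) (C : Subfield K) {k : ℕ} (ℓ : Fin k → K) : Prop :=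
  ∀ i j, v (ℓ i) = v (ℓ j) ∨ v (ℓ i) - v (ℓ j) ∉ valGroup v C

/-- The `C`-linear span of a tuple, as a set. -/
def spanIn (C : Subfield K) {n : ℕ} (a : Fin n → K) : Set K :=
  {x | ∃ c : Fin n → K, (∀ i, c i ∈ C) ∧ x = ∑ i, c i * a i}

/-- `L` has the good separated basis property over `C`: every finite-dimensional
`C`-subspace of `L` has a good separated basis. -/
def GoodSepBasisProp (v : AddValuation K Γ) (C L : Subfield K) : Prop :=
  ∀ (n : ℕ) (a : Fin n → K), (∀ i, a i ∈ L) →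
    ∃ (k : ℕ) (ℓ : Fin k → K), (∀ i, ℓ i ∈ L ∧ ℓ i ≠ 0) ∧
      spanIn C ℓ = spanIn C a ∧ SepOver v C ℓ ∧ GoodOver v C ℓ

/-- The residues of the tuple `a` (of elements of the valuation ring) are linearly
independent over the residue field of `F`. -/
def ResIndepOver (v : AddValuation K Γ) (F : Subfield K) {n : ℕ} (a : Fin n → K) : Prop :=
  ∀ c : Fin n → K, (∀ i, c i ∈ F ∧ 0 ≤ v (c i)) →
    0 < v (∑ i, c i * a i) → ∀ i, 0 < v (c i)

/-- The residue fields of `L` and `M` are linearly disjoint over the residue field of `C`: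
any tuple of integers of `L` whose residues are linearly independent over `k_C`
stays residue-independent over `k_M`. -/
def ResLinDisjoint (v : AddValuation K Γ) (C L M : Subfield K) : Prop :=
  ∀ (n : ℕ) (a : Fin n → K), (∀ i, a i ∈ L ∧ 0 ≤ v (a i)) →
    ResIndepOver v C a → ResIndepOver v M a

/-- A tuple is linearly independent over the subset `S` of `K`. -/
def LinIndepOver (S : Set K) {n : ℕ} (a : Fin n → K) : Prop :=
  ∀ c : Fin n → K, (∀ i, c i ∈ S) → ∑ i, c i * a i = 0 → ∀ i, c i = 0


section Aux

variable {K : Type*} [Field K] {Γ : Type*} [LinearOrderedAddCommGroupWithTop Γ]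

lemma inf_univ_succ {k : ℕ} (f : Fin (k + 1) → Γ) :
    Finset.univ.inf f = min (f 0) (Finset.univ.inf (f ∘ Fin.succ)) := by
  rw [Fin.univ_succ, Finset.inf_cons, Finset.inf_map]
  rfl

lemma spanIn_zero_mem (C : Subfield K) {n : ℕ} (a : Fin n → K) : (0 : K) ∈ spanIn C a :=
  ⟨fun _ => 0, fun _ => C.zero_mem, by simp⟩

lemma spanIn_combo (C : Subfield K) {n : ℕ} {a : Fin n → K} {x y e : K}
    (hx : x ∈ spanIn C a) (hy : y ∈ spanIn C a) (he : e ∈ C) :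
    e * x + y ∈ spanIn C a := by
  obtain ⟨c, hc, rfl⟩ := hx
  obtain ⟨d, hd, rfl⟩ := hy
  refine ⟨fun i => e * c i + d i, fun i => C.add_mem (C.mul_mem he (hc i)) (hd i), ?_⟩
  rw [Finset.mul_sum, ← Finset.sum_add_distrib]
  congr 1; ext i; ring

lemma spanIn_cons (C : Subfield K) {n : ℕ} (x : K) (a : Fin n → K) (w : K) :
    w ∈ spanIn C (Fin.cons x a) ↔ ∃ e ∈ C, ∃ s ∈ spanIn C a, w = e * x + s := by
  constructor
  · rintro ⟨c, hc, rfl⟩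
    refine ⟨c 0, hc 0, ∑ i, c i.succ * a i, ⟨fun i => c i.succ, fun i => hc i.succ, rfl⟩, ?_⟩
    rw [Fin.sum_univ_succ]
    simp
  · rintro ⟨e, he, s, ⟨d, hd, rfl⟩, rfl⟩
    refine ⟨Fin.cons e d, fun i => ?_, ?_⟩
    · refine Fin.cases ?_ ?_ i
      · simpa using he
      · intro j; simpa using hd j
    · rw [Fin.sum_univ_succ]
      simp

lemma spanIn_subset (C L : Subfield K) (hCL : C ≤ L) {n : ℕ} {a : Fin n → K}
    (ha : ∀ i, a i ∈ L) : spanIn C a ⊆ (L : Set K) := by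
  rintro x ⟨c, hc, rfl⟩
  exact L.sum_mem fun i _ => L.mul_mem (hCL (hc i)) (ha i)

lemma spanIn_tail_subset (C : Subfield K) {n : ℕ} (a : Fin (n + 1) → K) :
    spanIn C (fun i => a i.succ) ⊆ spanIn C a := by
  intro x hx
  have := (spanIn_cons C (a 0) (fun i => a i.succ) x).mpr
    ⟨0, C.zero_mem, x, hx, by ring⟩
  rwa [show (Fin.cons (a 0) (fun i => a i.succ) : Fin (n+1) → K) = a from
    Fin.cons_self_tail a] at this

/-- values taken on the span of a separated tuple lie in the (finite) set of values
of the tuple, together with `⊤`. -/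
lemma sep_val_mem (v : AddValuation K Γ) (C : Subfield K)
    (htriv : ∀ c ∈ C, c ≠ 0 → v c = 0) {k : ℕ} {ℓ : Fin k → K}
    (hsep : SepOver v C ℓ) {s : K} (hs : s ∈ spanIn C ℓ) :
    v s ∈ (Set.range fun i => v (ℓ i)) ∪ {⊤} := by
  obtain ⟨c, hc, rfl⟩ := hs
  rw [hsep c hc]
  rcases isEmpty_or_nonempty (Fin k) with h | h
  · right
    simp [Finset.univ_eq_empty]
  · obtain ⟨i, -, hi⟩ := Finset.exists_mem_eq_inf (Finset.univ : Finset (Fin k))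
      Finset.univ_nonempty (fun i => v (c i * ℓ i))
    rw [hi]
    by_cases hci : c i = 0
    · right; simp [hci, v.map_zero]
    · left
      exact ⟨i, by rw [v.map_mul, htriv (c i) (hc i) hci, zero_add]⟩

end Aux

/-- if `C` is trivially valued and `C ⊆ M` are valued fields, then every
finite-dimensional `C`-vector subspace of `M` has a separated basis. -/
theorem trivially_valued_base_has_separated_basis
    (v : AddValuation K Γ) (C M : Subfield K) (hCM : C ≤ M)
    (htriv : ∀ c ∈ C, c ≠ 0 → v c = 0)
    (n : ℕ) (a : Fin n → K) (ha : ∀ i, a i ∈ M) :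
    ∃ (k : ℕ) (m : Fin k → K), (∀ i, m i ∈ M ∧ m i ≠ 0) ∧
      spanIn C m = spanIn C a ∧ SepOver v C m := by
  induction n with
  | zero =>
    refine ⟨0, Fin.elim0, fun i => i.elim0, ?_, ?_⟩
    · ext x
      constructor
      · rintro ⟨c, -, rfl⟩; exact ⟨Fin.elim0, fun i => i.elim0, by simp⟩
      · rintro ⟨c, -, rfl⟩; exact ⟨Fin.elim0, fun i => i.elim0, by simp⟩
    · intro c hc
      simp [Finset.univ_eq_empty, v.map_zero]
  | succ n ih =>
    obtain ⟨k, ℓ, hℓM, hspan, hsep⟩ := ih (fun i => a i.succ) (fun i => ha i.succ)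
    have hconsa : (Fin.cons (a 0) (fun i => a i.succ) : Fin (n+1) → K) = a :=
      Fin.cons_self_tail a
    by_cases hmem : a 0 ∈ spanIn C ℓ
    · -- the new vector is already in the span
      refine ⟨k, ℓ, hℓM, ?_, hsep⟩
      apply Set.Subset.antisymm
      · rw [hspan]; exact spanIn_tail_subset C a
      · intro x hx
        rw [← hconsa] at hx
        obtain ⟨e, he, s, hs, rfl⟩ := (spanIn_cons C _ _ x).mp hx
        rw [← hspan] at hs
        exact spanIn_combo C hmem hs he
    · -- find an element of `a 0 + span ℓ` of maximal value
      set S : Set Γ := {g | ∃ s ∈ spanIn C ℓ, v (a 0 - s) = g} with hS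
      have hSne : S.Nonempty := ⟨v (a 0), 0, spanIn_zero_mem C ℓ, by rw [sub_zero]⟩
      have hmax : ∃ g ∈ S, ∀ g' ∈ S, g' ≤ g := by
        by_contra hno
        push_neg at hno
        have hsubset : S ⊆ (Set.range fun i => v (ℓ i)) ∪ {⊤} := by
          rintro g ⟨s, hsmem, rfl⟩
          obtain ⟨g', ⟨s', hs'mem, rfl⟩, hlt⟩ := hno _ ⟨s, hsmem, rfl⟩
          have hdiff : v (s' - s) = v (a 0 - s) := by
            have : s' - s = (a 0 - s) - (a 0 - s') := by ring
            rw [this, v.map_sub_eq_of_lt_left hlt]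
          rw [← hdiff]
          refine sep_val_mem v C htriv hsep ?_
          have := spanIn_combo C hsmem hs'mem (C.neg_mem C.one_mem)
          have heq : s' - s = (-1 : K) * s + s' := by ring
          rwa [← heq] at this
        have hfin : S.Finite :=
          Set.Finite.subset ((Set.finite_range _).union (Set.finite_singleton _)) hsubset
        obtain ⟨g, hgS, hg⟩ := Set.Finite.exists_maximalFor id S hfin hSne
        obtain ⟨g', hg'S, hlt⟩ := hno g hgS
        exact absurd (hg hg'S hlt.le) (not_le.mpr hlt)
      obtain ⟨g, ⟨s₀, hs₀, hvg⟩, hgmax⟩ := hmax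
      set m' : K := a 0 - s₀ with hm'
      have hm'ne : m' ≠ 0 := by
        intro h
        exact hmem (by rwa [sub_eq_zero.mp h])
      have hm'M : m' ∈ M :=
        M.sub_mem (ha 0) (spanIn_subset C M hCM (fun i => (hℓM i).1) hs₀)
      refine ⟨k + 1, Fin.cons m' ℓ, ?_, ?_, ?_⟩
      · intro i
        refine Fin.cases ?_ ?_ i
        · exact ⟨hm'M, hm'ne⟩
        · intro j; simpa using hℓM j
      · -- span equality
        apply Set.Subset.antisymm
        · intro x hx
          obtain ⟨e, he, s, hs, rfl⟩ := (spanIn_cons C _ _ x).mp hx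
          rw [← hconsa]
          refine (spanIn_cons C _ _ _).mpr ⟨e, he, s - e * s₀, ?_, by ring⟩
          rw [← hspan]
          have := spanIn_combo C hs₀ hs (C.neg_mem he)
          have heq : s - e * s₀ = (-e) * s₀ + s := by ring
          rwa [← heq] at this
        · intro x hx
          rw [← hconsa] at hx
          obtain ⟨e, he, s, hs, rfl⟩ := (spanIn_cons C _ _ x).mp hx
          rw [← hspan] at hs
          exact (spanIn_cons C _ _ _).mpr
            ⟨e, he, e * s₀ + s, spanIn_combo C hs₀ hs he, by ring⟩
      · -- separatedness
        intro c hc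
        set y : K := ∑ i, c i.succ * ℓ i with hy
        have hyspan : y ∈ spanIn C ℓ := ⟨fun i => c i.succ, fun i => hc i.succ, rfl⟩
        have hsum : ∑ i, c i * (Fin.cons m' ℓ : Fin (k+1) → K) i = c 0 * m' + y := by
          rw [Fin.sum_univ_succ]; simp [hy]
        have hinf : (Finset.univ.inf fun i => v (c i * (Fin.cons m' ℓ : Fin (k+1) → K) i))
            = min (v (c 0 * m')) (v y) := by
          rw [inf_univ_succ]
          simp only [Function.comp_def, Fin.cons_succ, Fin.cons_zero]
          rw [← hsep (fun i => c i.succ) (fun i => hc i.succ)]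
        rw [hsum, hinf]
        by_cases hc0 : c 0 = 0
        · simp [hc0, v.map_zero]
        · have hvc0 : v (c 0) = 0 := htriv (c 0) (hc 0) hc0
          have hvcm : v (c 0 * m') = v m' := by rw [v.map_mul, hvc0, zero_add]
          rcases lt_or_ge (v y) (v m') with hlt | hle
          · rw [v.map_add_eq_of_lt_right (by rwa [hvcm]), hvcm, min_eq_right hlt.le]
          · rw [hvcm, min_eq_left hle]
            apply le_antisymm
            · -- v (c0 m' + y) ≤ v m' by maximality
              have hs'' : s₀ - (c 0)⁻¹ * y ∈ spanIn C ℓ := by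
                have := spanIn_combo C hyspan hs₀
                  (C.neg_mem (C.inv_mem (hc 0)))
                have heq : s₀ - (c 0)⁻¹ * y = (-(c 0)⁻¹) * y + s₀ := by ring
                rwa [← heq] at this
              have hval : v (a 0 - (s₀ - (c 0)⁻¹ * y)) ≤ g :=
                hgmax _ ⟨_, hs'', rfl⟩
              have heq2 : c 0 * m' + y = c 0 * (a 0 - (s₀ - (c 0)⁻¹ * y)) := by
                field_simp [hm']
                ring
              rw [heq2, v.map_mul, hvc0, zero_add, hvg]
              exact hval
            · exact v.map_le_add (le_of_eq hvcm.symm) hle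

end ResidueFieldDomination
end

section
/- Let C ⊆ L ∩ M be valued fields inside a common valued field. Assume Γ_L ∩ Γ_M = Γ_C (the value groups of L and M intersect in the value group of C), the residue fields k_L and k_M are linearly disjoint over k_C, and ℓ_1,...,ℓ_k ∈ L is a good separated basis over C for the C-subspace it generates. Then ℓ_1,...,ℓ_k is still a good separated basis over M for the M-subspace of LM it generates. -/
open scoped BigOperators

namespace ResidueFieldDomination

variable {K : Type*} [Field K] {Γ : Type*} [LinearOrderedAddCommGroupWithTop Γ]

lemma addCancel {a b c : Γ} (hc : c ≠ ⊤) (h : a + c = b + c) : a = b := by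
  have h2 := congrArg (· + -c) h
  simpa [add_assoc, LinearOrderedAddCommGroupWithTop.add_neg_cancel_of_ne_top hc] using h2

lemma addLt {a b c : Γ} (hc : c ≠ ⊤) (h : a < b) : a + c < b + c :=
  lt_of_le_of_ne (add_le_add_left h.le c) (fun e => h.ne (addCancel hc e))

lemma ltOfAddLt {a b c : Γ} (h : a + c < b + c) : a < b := by
  by_contra h'
  exact absurd (add_le_add_left (not_lt.mp h') c) (not_le.mpr h)

/-- a good separated basis of `L` over `C` remains a good separated basis
over `M`, assuming `Γ_L ∩ Γ_M = Γ_C` and residue fields linearly disjoint over `k_C`. -/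
theorem separated_basis_lifts
    (v : AddValuation K Γ) (C L M : Subfield K) (hCL : C ≤ L) (hCM : C ≤ M)
    (hΓ : valGroup v L ∩ valGroup v M = valGroup v C)
    (hres : ResLinDisjoint v C L M)
    {k : ℕ} (ℓ : Fin k → K) (hℓ : ∀ i, ℓ i ∈ L ∧ ℓ i ≠ 0)
    (hsep : SepOver v C ℓ) (hgood : GoodOver v C ℓ) :
    SepOver v M ℓ ∧ GoodOver v M ℓ := by
  have vtop : ∀ x : K, v x = ⊤ ↔ x = 0 := fun x => v.top_iff
  constructor
  · -- SepOver
    intro c hc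
    by_contra hne
    have hge : Finset.univ.inf (fun i => v (c i * ℓ i)) ≤ v (∑ i, c i * ℓ i) :=
      v.map_le_sum (fun i _ => Finset.inf_le (Finset.mem_univ i))
    set γ := Finset.univ.inf (fun i => v (c i * ℓ i)) with hγdef
    have hgt : γ < v (∑ i, c i * ℓ i) := lt_of_le_of_ne hge (fun h => hne h.symm)
    have hγtop : γ ≠ ⊤ := fun h => absurd hgt (by rw [h]; exact not_lt.mpr le_top)
    have hunene : (Finset.univ : Finset (Fin k)).Nonempty := by
      by_contra h
      rw [Finset.not_nonempty_iff_eq_empty] at h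
      exact hγtop (by simp [hγdef, h])
    obtain ⟨i0, -, hi0⟩ := Finset.exists_mem_eq_inf Finset.univ hunene
      (fun i => v (c i * ℓ i))
    -- basic facts for indices achieving the inf
    have hfacts : ∀ i, v (c i * ℓ i) = γ → c i ≠ 0 := by
      intro i hi
      intro h0
      exact hγtop (by rw [← hi, h0, zero_mul, (vtop 0).mpr rfl])
    have hci0 : c i0 ≠ 0 := hfacts i0 hi0.symm
    -- key: values of ℓ and c agree on the inf-achieving set
    have key : ∀ i, v (c i * ℓ i) = γ → v (ℓ i) = v (ℓ i0) ∧ v (c i) = v (c i0) := by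
      intro i hi
      have hci : c i ≠ 0 := hfacts i hi
      have hmid : v (c i * ℓ i0) ≠ ⊤ := by
        exact v.ne_top_iff.mpr (mul_ne_zero hci (hℓ i0).2)
      have h1 : v (ℓ i / ℓ i0) + v (c i * ℓ i0) = γ := by
        rw [← v.map_mul]
        rw [show ℓ i / ℓ i0 * (c i * ℓ i0) = c i * ℓ i by
          field_simp [(hℓ i0).2]]
        exact hi
      have h2 : v (c i0 / c i) + v (c i * ℓ i0) = γ := by
        rw [← v.map_mul]
        rw [show c i0 / c i * (c i * ℓ i0) = c i0 * ℓ i0 by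
          field_simp [hci]]
        exact hi0.symm
      have hδ : v (ℓ i / ℓ i0) = v (c i0 / c i) := addCancel hmid (h1.trans h2.symm)
      have hδC : v (ℓ i / ℓ i0) ∈ valGroup v C := by
        rw [← hΓ]
        constructor
        · exact ⟨ℓ i / ℓ i0, L.div_mem (hℓ i).1 (hℓ i0).1,
            div_ne_zero (hℓ i).2 (hℓ i0).2, rfl⟩
        · exact ⟨c i0 / c i, M.div_mem (hc i0) (hc i),
            div_ne_zero hci0 hci, hδ.symm⟩
      have hleq : v (ℓ i) = v (ℓ i0) := by
        rcases hgood i i0 with h | h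
        · exact h
        · exact absurd (by rw [← v.map_div]; exact hδC) h
      refine ⟨hleq, ?_⟩
      have hltop : v (ℓ i0) ≠ ⊤ := by exact v.ne_top_iff.mpr (hℓ i0).2
      apply addCancel hltop
      calc v (c i) + v (ℓ i0) = v (c i * ℓ i) := by rw [← hleq, ← v.map_mul]
      _ = γ := hi
      _ = v (c i0 * ℓ i0) := by rw [hγdef]; exact hi0
      _ = v (c i0) + v (ℓ i0) := v.map_mul _ _
    -- the inf-achieving set S, reindexed by Fin n
    set S : Finset (Fin k) := Finset.univ.filter (fun i => v (c i * ℓ i) = γ) with hSdef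
    have hi0S : i0 ∈ S :=
      Finset.mem_filter.mpr ⟨Finset.mem_univ _, by rw [hγdef]; exact hi0.symm⟩
    set n := S.card with hndef
    set e : ↥S ≃ Fin n := S.equivFin with hedef
    set g : Fin n → Fin k := fun j => (e.symm j : Fin k) with hgdef
    have hgS : ∀ j, g j ∈ S := fun j => (e.symm j).2
    have hgγ : ∀ j, v (c (g j) * ℓ (g j)) = γ := by
      intro j
      have := hgS j
      simpa [hSdef] using this
    have hsum : ∀ f : Fin k → K, ∑ j, f (g j) = ∑ i ∈ S, f i := by
      intro f
      rw [← Finset.sum_coe_sort S f]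
      exact Fintype.sum_equiv e.symm _ _ (fun j => rfl)
    -- the residue tuple
    set a : Fin n → K := fun j => ℓ (g j) / ℓ i0 with hadef
    have hltop : v (ℓ i0) ≠ ⊤ := by exact v.ne_top_iff.mpr (hℓ i0).2
    have hva : ∀ j, v (a j) = 0 := by
      intro j
      apply addCancel hltop
      rw [zero_add, ← v.map_mul]
      simp only [hadef]
      rw [div_mul_cancel₀ _ (hℓ i0).2]
      exact (key (g j) (hgγ j)).1
    -- residue independence over C
    have hCind : ResIndepOver v C a := by
      intro d hd hpos j
      set c' : Fin k → K := fun i => if h : i ∈ S then d (e ⟨i, h⟩) else 0 with hc'def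
      have hc'g : ∀ j', c' (g j') = d j' := by
        intro j'
        have h' : g j' ∈ S := hgS j'
        simp only [hc'def, dif_pos h']
        congr 1
        have : (⟨g j', h'⟩ : ↥S) = e.symm j' := Subtype.ext rfl
        rw [this, Equiv.apply_symm_apply]
      have hsum1 : ∑ i, c' i * ℓ i = ∑ j', d j' * ℓ (g j') := by
        have hS0 : ∑ i, c' i * ℓ i = ∑ i ∈ S, c' i * ℓ i := by
          refine (Finset.sum_subset (Finset.subset_univ S) ?_).symm
          intro x _ hx
          simp [hc'def, dif_neg hx]
        have hS1 : ∑ i ∈ S, c' i * ℓ i = ∑ j', c' (g j') * ℓ (g j') := (hsum _).symm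
        rw [hS0, hS1]
        exact Finset.sum_congr rfl (fun j' _ => by rw [hc'g j'])
      have hsum2 : ∑ j', d j' * ℓ (g j') = (∑ j', d j' * a j') * ℓ i0 := by
        rw [Finset.sum_mul]
        refine Finset.sum_congr rfl (fun j' _ => ?_)
        simp only [hadef]
        rw [mul_assoc, div_mul_cancel₀ _ (hℓ i0).2]
      have hc'C : ∀ i, c' i ∈ C := by
        intro i
        by_cases h : i ∈ S
        · simp only [hc'def, dif_pos h]; exact (hd _).1
        · simp only [hc'def, dif_neg h]; exact C.zero_mem
      have hvsum : v (∑ i, c' i * ℓ i) = Finset.univ.inf fun i => v (c' i * ℓ i) :=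
        hsep c' hc'C
      have hlt : v (ℓ i0) < v (∑ i, c' i * ℓ i) := by
        rw [hsum1, hsum2, v.map_mul]
        calc v (ℓ i0) = 0 + v (ℓ i0) := (zero_add _).symm
        _ < v (∑ j', d j' * a j') + v (ℓ i0) := addLt hltop hpos
      have hterm : v (ℓ i0) < v (c' (g j) * ℓ (g j)) := by
        calc v (ℓ i0) < v (∑ i, c' i * ℓ i) := hlt
        _ = Finset.univ.inf (fun i => v (c' i * ℓ i)) := hvsum
        _ ≤ v (c' (g j) * ℓ (g j)) := Finset.inf_le (Finset.mem_univ _)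
      rw [hc'g j, v.map_mul, (key (g j) (hgγ j)).1] at hterm
      apply ltOfAddLt (c := v (ℓ i0))
      rw [zero_add]
      exact hterm
    -- transfer to M
    have haL : ∀ j, a j ∈ L ∧ 0 ≤ v (a j) := by
      intro j
      exact ⟨L.div_mem (hℓ (g j)).1 (hℓ i0).1, le_of_eq (hva j).symm⟩
    have hMind : ResIndepOver v M a := hres n a haL hCind
    -- apply with the coefficients from M
    set d : Fin n → K := fun j => c (g j) / c i0 with hddef
    have hvd : ∀ j, v (d j) = 0 := by
      intro j
      have hctop : v (c i0) ≠ ⊤ := by exact v.ne_top_iff.mpr hci0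
      apply addCancel hctop
      rw [zero_add, ← v.map_mul]
      simp only [hddef]
      rw [div_mul_cancel₀ _ hci0]
      exact (key (g j) (hgγ j)).2
    have hdM : ∀ j, d j ∈ M ∧ 0 ≤ v (d j) := by
      intro j
      exact ⟨M.div_mem (hc (g j)) (hc i0), le_of_eq (hvd j).symm⟩
    -- v of the S-part of the sum is > γ
    have hSsum : γ < v (∑ i ∈ S, c i * ℓ i) := by
      have hsplit : (∑ i ∈ S, c i * ℓ i) =
          (∑ i, c i * ℓ i) - ∑ i ∈ Finset.univ.filter (fun i => ¬ v (c i * ℓ i) = γ),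
            c i * ℓ i := by
        rw [eq_sub_iff_add_eq, hSdef]
        exact Finset.sum_filter_add_sum_filter_not _ _ _
      rw [hsplit]
      have hcomp : γ < v (∑ i ∈ Finset.univ.filter (fun i => ¬ v (c i * ℓ i) = γ),
          c i * ℓ i) := by
        apply v.map_lt_sum hγtop
        intro i hi
        rw [Finset.mem_filter] at hi
        exact lt_of_le_of_ne (hγdef ▸ Finset.inf_le (Finset.mem_univ i)) (Ne.symm hi.2)
      exact lt_of_lt_of_le (lt_min hgt hcomp) (v.map_sub _ _)
    have hpos : 0 < v (∑ j, d j * a j) := by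
      have hprod : (∑ j, d j * a j) * (c i0 * ℓ i0) = ∑ i ∈ S, c i * ℓ i := by
        have hS2 : ∑ i ∈ S, c i * ℓ i = ∑ j, c (g j) * ℓ (g j) := (hsum _).symm
        rw [hS2, Finset.sum_mul]
        refine Finset.sum_congr rfl (fun j _ => ?_)
        simp only [hddef, hadef]
        rw [div_mul_div_comm, div_mul_cancel₀ _ (mul_ne_zero hci0 (hℓ i0).2)]
      apply ltOfAddLt (c := γ)
      rw [zero_add]
      calc γ < v (∑ i ∈ S, c i * ℓ i) := hSsum
      _ = v ((∑ j, d j * a j) * (c i0 * ℓ i0)) := by rw [hprod]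
      _ = v (∑ j, d j * a j) + γ := by rw [v.map_mul, ← hi0]
    have hfin := hMind d hdM hpos (e ⟨i0, hi0S⟩)
    have hd1 : d (e ⟨i0, hi0S⟩) = 1 := by
      simp only [hddef]
      rw [show g (e ⟨i0, hi0S⟩) = i0 by
        simp only [hgdef, Equiv.symm_apply_apply]]
      exact div_self hci0
    rw [hd1, v.map_one] at hfin
    exact lt_irrefl _ hfin
  · -- GoodOver
    intro i j
    by_cases heq : v (ℓ i) = v (ℓ j)
    · exact Or.inl heq
    · right
      intro hM
      have hC : v (ℓ i) - v (ℓ j) ∈ valGroup v C := by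
        rw [← hΓ]
        exact ⟨⟨ℓ i / ℓ j, L.div_mem (hℓ i).1 (hℓ j).1,
          div_ne_zero (hℓ i).2 (hℓ j).2, v.map_div⟩, hM⟩
      rcases hgood i j with h | h
      · exact heq h
      · exact h hC


end ResidueFieldDomination
end

section
/- Let C ⊆ L ∩ M be valued fields inside a common valued field. Assume Γ_L ∩ Γ_M = Γ_C, k_L and k_M are linearly disjoint over k_C, and L has the good separated basis property over C. Then the value group Γ_{LM} of the compositum LM is the subgroup generated by Γ_L and Γ_M. -/
open scoped BigOperators

namespace ResidueFieldDomination

variable {K : Type*} [Field K] {Γ : Type*} [LinearOrderedAddCommGroupWithTop Γ]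

/-- Elements of the ring generated by L ∪ M are sums ∑ mᵢ ℓᵢ. -/
lemma ring_repr (L M : Subfield K) {x : K}
    (hx : x ∈ Subring.closure ((L : Set K) ∪ (M : Set K))) :
    ∃ (n : ℕ) (ℓ m : Fin n → K), (∀ i, ℓ i ∈ L) ∧ (∀ i, m i ∈ M) ∧ x = ∑ i, m i * ℓ i := by
  induction hx using Subring.closure_induction with
  | mem y hy =>
    rcases hy with hyL | hyM
    · exact ⟨1, fun _ => y, fun _ => 1, fun _ => hyL, fun _ => M.one_mem, by simp⟩
    · exact ⟨1, fun _ => 1, fun _ => y, fun _ => L.one_mem, fun _ => hyM, by simp⟩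
  | zero => exact ⟨0, fun i => 0, fun i => 0, fun i => i.elim0, fun i => i.elim0, by simp⟩
  | one => exact ⟨1, fun _ => 1, fun _ => 1, fun _ => L.one_mem, fun _ => M.one_mem, by simp⟩
  | add y z hy hz ihy ihz =>
    obtain ⟨n₁, ℓ₁, m₁, hℓ₁, hm₁, rfl⟩ := ihy
    obtain ⟨n₂, ℓ₂, m₂, hℓ₂, hm₂, rfl⟩ := ihz
    refine ⟨n₁ + n₂, Fin.addCases ℓ₁ ℓ₂, Fin.addCases m₁ m₂, ?_, ?_, ?_⟩
    · intro i; refine Fin.addCases (fun j => ?_) (fun j => ?_) i <;> simp [hℓ₁, hℓ₂]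
    · intro i; refine Fin.addCases (fun j => ?_) (fun j => ?_) i <;> simp [hm₁, hm₂]
    · rw [Fin.sum_univ_add]; simp
  | neg y hy ihy =>
    obtain ⟨n, ℓ, m, hℓ, hm, rfl⟩ := ihy
    exact ⟨n, ℓ, fun i => -(m i), hℓ, fun i => M.neg_mem (hm i), by
      rw [← Finset.sum_neg_distrib]; exact Finset.sum_congr rfl fun i _ => by ring⟩
  | mul y z hy hz ihy ihz =>
    obtain ⟨n₁, ℓ₁, m₁, hℓ₁, hm₁, rfl⟩ := ihy
    obtain ⟨n₂, ℓ₂, m₂, hℓ₂, hm₂, rfl⟩ := ihz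
    refine ⟨n₁ * n₂,
      fun p => ℓ₁ (finProdFinEquiv.symm p).1 * ℓ₂ (finProdFinEquiv.symm p).2,
      fun p => m₁ (finProdFinEquiv.symm p).1 * m₂ (finProdFinEquiv.symm p).2,
      fun p => L.mul_mem (hℓ₁ _) (hℓ₂ _), fun p => M.mul_mem (hm₁ _) (hm₂ _), ?_⟩
    have hre : ∑ i : Fin (n₁ * n₂),
        (fun p => m₁ (finProdFinEquiv.symm p).1 * m₂ (finProdFinEquiv.symm p).2) i *
          (fun p => ℓ₁ (finProdFinEquiv.symm p).1 * ℓ₂ (finProdFinEquiv.symm p).2) i =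
        ∑ p : Fin n₁ × Fin n₂, m₁ p.1 * m₂ p.2 * (ℓ₁ p.1 * ℓ₂ p.2) :=
      Fintype.sum_equiv finProdFinEquiv.symm _ _ (fun i => rfl)
    rw [Finset.sum_mul_sum, hre, Fintype.sum_prod_type]
    exact Finset.sum_congr rfl fun i _ => Finset.sum_congr rfl fun j _ => by ring

-- helpers
lemma aux_add_le_cancel {a b t : Γ} (ht : t ≠ ⊤) (h : a + t ≤ b + t) : a ≤ b := by
  have h2 := add_le_add_left h (-t)
  rwa [add_assoc, add_assoc, LinearOrderedAddCommGroupWithTop.add_neg_cancel_of_ne_top ht,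
    add_zero, add_zero] at h2

lemma aux_add_lt_cancel {a b t : Γ} (h : a + t < b + t) : a < b := by
  by_contra hc
  exact absurd (add_le_add_left (not_lt.mp hc) t) (not_le.mpr h)

lemma aux_sub_self {t : Γ} (ht : t ≠ ⊤) : t - t = 0 := by
  rw [sub_eq_add_neg]; exact LinearOrderedAddCommGroupWithTop.add_neg_cancel_of_ne_top ht

lemma aux_sub_pos {t x : Γ} (ht : t ≠ ⊤) : 0 < x - t ↔ t < x := by
  constructor
  · intro h
    by_contra hc
    have hx : x ≤ t := not_lt.mp hc
    have h2 : x - t ≤ t - t := by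
      rw [sub_eq_add_neg, sub_eq_add_neg]; exact add_le_add_left hx _
    rw [aux_sub_self ht] at h2
    exact absurd h2 (not_le.mpr h)
  · intro h
    by_contra hc
    have h2 : x - t ≤ 0 := not_lt.mp hc
    have h3 : (x - t) + t ≤ 0 + t := add_le_add_left h2 t
    rw [sub_eq_add_neg, add_assoc, add_comm (-t) t,
      LinearOrderedAddCommGroupWithTop.add_neg_cancel_of_ne_top ht, add_zero, zero_add] at h3
    exact absurd h3 (not_le.mpr h)

lemma aux_add_right_cancel {a b t : Γ} (ht : t ≠ ⊤) (h : a + t = b + t) : a = b :=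
  le_antisymm (aux_add_le_cancel ht h.le) (aux_add_le_cancel ht h.ge)

/-- Separated-basis lifting: a good separated tuple over `C` stays separated over `M`. -/
lemma sep_lift (v : AddValuation K Γ) (C L M : Subfield K) (hCL : C ≤ L) (hCM : C ≤ M)
    (hΓ : valGroup v L ∩ valGroup v M = valGroup v C)
    (hres : ResLinDisjoint v C L M)
    {k : ℕ} {ℓ : Fin k → K} (hℓL : ∀ i, ℓ i ∈ L) (hℓ0 : ∀ i, ℓ i ≠ 0)
    (hsep : SepOver v C ℓ) (hgood : GoodOver v C ℓ)
    (m : Fin k → K) (hm : ∀ i, m i ∈ M) :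
    v (∑ i, m i * ℓ i) = Finset.univ.inf fun i => v (m i * ℓ i) := by
  have hge : (Finset.univ.inf fun i => v (m i * ℓ i)) ≤ v (∑ i, m i * ℓ i) :=
    v.map_le_sum fun i _ => Finset.inf_le (Finset.mem_univ i)
  by_contra hne
  have hlt : (Finset.univ.inf fun i => v (m i * ℓ i)) < v (∑ i, m i * ℓ i) :=
    lt_of_le_of_ne hge (Ne.symm hne)
  set γ : Γ := Finset.univ.inf fun i => v (m i * ℓ i) with hγ
  have hγtop : γ ≠ ⊤ := hlt.ne_top
  -- univ is nonempty
  have huniv : (Finset.univ : Finset (Fin k)).Nonempty := by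
    rcases Finset.eq_empty_or_nonempty (Finset.univ : Finset (Fin k)) with he | h
    · exfalso; apply hγtop; rw [hγ, he, Finset.inf_empty]
    · exact h
  obtain ⟨i₀, -, hi₀⟩ := Finset.exists_mem_eq_inf Finset.univ huniv fun i => v (m i * ℓ i)
  set I : Finset (Fin k) := Finset.univ.filter fun i => v (m i * ℓ i) = γ with hI
  have hi₀I : i₀ ∈ I := Finset.mem_filter.mpr ⟨Finset.mem_univ _, hi₀.symm⟩
  have hIval : ∀ i ∈ I, v (m i * ℓ i) = γ := fun i hi => (Finset.mem_filter.mp hi).2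
  have hm0 : ∀ i ∈ I, m i ≠ 0 := by
    intro i hi h0
    apply hγtop
    rw [← hIval i hi, h0, zero_mul, AddValuation.map_zero]
  -- Step A : values of ℓ agree on I
  have hstepA : ∀ i ∈ I, ∀ j ∈ I, v (ℓ i) = v (ℓ j) := by
    intro i hi j hj
    rcases hgood i j with h | h
    · exact h
    exfalso
    apply h
    rw [← hΓ]
    have hvdiv : v (ℓ i / ℓ j) = v (ℓ i) - v (ℓ j) := v.map_div
    have hkey : v (ℓ i / ℓ j) = v (m j / m i) := by
      have hre : ℓ i / ℓ j = (m j / m i) * ((m i * ℓ i) / (m j * ℓ j)) := by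
        field_simp [hm0 i hi, hm0 j hj, hℓ0 j]
      have h0 : v ((m i * ℓ i) / (m j * ℓ j)) = 0 := by
        rw [AddValuation.map_div, hIval i hi, hIval j hj, aux_sub_self hγtop]
      rw [hre, AddValuation.map_mul, h0, add_zero]
    constructor
    · exact ⟨ℓ i / ℓ j, L.div_mem (hℓL i) (hℓL j), div_ne_zero (hℓ0 i) (hℓ0 j), hvdiv⟩
    · exact ⟨m j / m i, M.div_mem (hm j) (hm i), div_ne_zero (hm0 j hj) (hm0 i hi),
        hkey.symm.trans hvdiv⟩
  have hℓtop : v (ℓ i₀) ≠ ⊤ := (v.ne_top_iff).mpr (hℓ0 i₀)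
  have hstepA' : ∀ i ∈ I, v (m i) = v (m i₀) := by
    intro i hi
    have h1 : v (m i) + v (ℓ i) = v (m i₀) + v (ℓ i₀) := by
      rw [← AddValuation.map_mul, ← AddValuation.map_mul, hIval i hi, hIval i₀ hi₀I]
    rw [hstepA i hi i₀ hi₀I] at h1
    exact aux_add_right_cancel hℓtop h1
  -- the subtuple indexed by I, renormalized
  set n : ℕ := I.card with hn
  set e : Fin n ≃o {x // x ∈ I} := I.orderIsoOfFin rfl with he
  set a : Fin n → K := fun j => ℓ (e j) / ℓ i₀ with ha
  have haL : ∀ j, a j ∈ L ∧ 0 ≤ v (a j) := by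
    intro j
    refine ⟨L.div_mem (hℓL _) (hℓL i₀), ?_⟩
    rw [ha]
    simp only
    rw [AddValuation.map_div, hstepA _ (e j).2 i₀ hi₀I, aux_sub_self hℓtop]
  -- reindexing identity
  have hreindex : ∀ f : Fin k → K, ∑ j : Fin n, f (e j) = ∑ i ∈ I, f i := by
    intro f
    rw [← Finset.sum_coe_sort I f]
    exact Equiv.sum_comp e.toEquiv fun x => f ↑x
  -- C-residue-independence of a
  have hindepC : ResIndepOver v C a := by
    intro c hc hpos j
    set c' : Fin k → K := fun i => if h : i ∈ I then c (e.symm ⟨i, h⟩) else 0 with hc'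
    have hc'e : ∀ j : Fin n, c' ↑(e j) = c j := by
      intro j
      rw [hc']
      simp only [(e j).2, dif_pos]
      congr 1
      rw [Subtype.coe_eta, OrderIso.symm_apply_apply]
    have hc'C : ∀ i, c' i ∈ C := by
      intro i
      rw [hc']
      by_cases h : i ∈ I
      · simpa [h] using (hc _).1
      · simp [h, C.zero_mem]
    have hsum1 : ∑ j, c j * a j = (∑ i, c' i * ℓ i) / ℓ i₀ := by
      have h1 : ∑ i, c' i * ℓ i = ∑ i ∈ I, c' i * ℓ i := by
        refine (Finset.sum_subset I.subset_univ ?_).symm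
        intro i _ hi
        rw [hc']
        simp [hi]
      have h2 : ∑ j : Fin n, c' ↑(e j) * ℓ ↑(e j) = ∑ i ∈ I, c' i * ℓ i :=
        hreindex fun i => c' i * ℓ i
      rw [h1, ← h2]
      rw [Finset.sum_div]
      refine Finset.sum_congr rfl fun j _ => ?_
      rw [hc'e j, ha, mul_div_assoc]
    have hsepval := hsep c' hc'C
    have hval : v (∑ j, c j * a j) = v (∑ i, c' i * ℓ i) - v (ℓ i₀) := by
      rw [hsum1, AddValuation.map_div]
    rw [hval, aux_sub_pos hℓtop] at hpos
    have hle : v (∑ i, c' i * ℓ i) ≤ v (c j) + v (ℓ i₀) := by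
      rw [hsepval]
      refine le_trans (Finset.inf_le (Finset.mem_univ (↑(e j) : Fin k))) ?_
      rw [hc'e j, AddValuation.map_mul, hstepA _ (e j).2 i₀ hi₀I]
    have hlt2 : 0 + v (ℓ i₀) < v (c j) + v (ℓ i₀) := by
      rw [zero_add]
      exact lt_of_lt_of_le hpos hle
    exact aux_add_lt_cancel hlt2
  -- transfer to M
  have hindepM : ResIndepOver v M a := hres n a haL hindepC
  -- apply with the m-coefficients
  set d : Fin n → K := fun j => m (e j) / m i₀ with hd
  have hmtop : v (m i₀) ≠ ⊤ := (v.ne_top_iff).mpr (hm0 i₀ hi₀I)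
  have hdM : ∀ j, d j ∈ M ∧ 0 ≤ v (d j) := by
    intro j
    refine ⟨M.div_mem (hm _) (hm i₀), ?_⟩
    rw [hd]
    simp only
    rw [AddValuation.map_div, hstepA' _ (e j).2, aux_sub_self hmtop]
  have hdsum : ∑ j, d j * a j = (∑ i ∈ I, m i * ℓ i) / (m i₀ * ℓ i₀) := by
    rw [← hreindex fun i => m i * ℓ i, Finset.sum_div]
    refine Finset.sum_congr rfl fun j _ => ?_
    rw [hd, ha]
    simp only
    rw [div_mul_div_comm]
  have hItot : γ < v (∑ i ∈ I, m i * ℓ i) := by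
    have hcompl : ∑ i ∈ I, m i * ℓ i = (∑ i, m i * ℓ i) - ∑ i ∈ Finset.univ \ I, m i * ℓ i := by
      rw [eq_sub_iff_add_eq, add_comm, Finset.sum_sdiff I.subset_univ]
    have hlt3 : γ < v (∑ i ∈ Finset.univ \ I, m i * ℓ i) := by
      refine v.map_lt_sum hγtop fun i hi => ?_
      have hiI : i ∉ I := (Finset.mem_sdiff.mp hi).2
      have hne2 : v (m i * ℓ i) ≠ γ := fun h => hiI (Finset.mem_filter.mpr ⟨Finset.mem_univ _, h⟩)
      exact lt_of_le_of_ne (Finset.inf_le (Finset.mem_univ i)) (Ne.symm hne2)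
    rw [hcompl, sub_eq_add_neg]
    calc γ < min (v (∑ i, m i * ℓ i)) (v (-∑ i ∈ Finset.univ \ I, m i * ℓ i)) := by
            rw [lt_min_iff, AddValuation.map_neg]
            exact ⟨hlt, hlt3⟩
      _ ≤ _ := v.map_add _ _
  have hdpos : 0 < v (∑ j, d j * a j) := by
    rw [hdsum, AddValuation.map_div, hIval i₀ hi₀I, aux_sub_pos hγtop]
    exact hItot
  have hfinal := hindepM d hdM hdpos (e.symm ⟨i₀, hi₀I⟩)
  rw [hd] at hfinal
  simp only [OrderIso.apply_symm_apply] at hfinal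
  rw [div_self (hm0 i₀ hi₀I), AddValuation.map_one] at hfinal
  exact lt_irrefl _ hfinal

/-- Every nonzero element of the ring generated by `L ∪ M` has value `v ℓ + v m`. -/
lemma val_of_ring_elt (v : AddValuation K Γ) (C L M : Subfield K) (hCL : C ≤ L) (hCM : C ≤ M)
    (hΓ : valGroup v L ∩ valGroup v M = valGroup v C)
    (hres : ResLinDisjoint v C L M) (hgsb : GoodSepBasisProp v C L)
    {p : K} (hp : p ∈ Subring.closure ((L : Set K) ∪ (M : Set K))) (hp0 : p ≠ 0) :
    ∃ x ∈ L, ∃ y ∈ M, x ≠ 0 ∧ y ≠ 0 ∧ v p = v x + v y := by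
  obtain ⟨k, ℓ, m, hℓ, hm, rfl⟩ := ring_repr L M hp
  obtain ⟨k', ℓ', hℓ', hspan, hsep, hgood⟩ := hgsb k ℓ hℓ
  -- each ℓ i lies in the span of ℓ', so has coefficients in C
  have hmemspan : ∀ i, ℓ i ∈ spanIn C ℓ' := by
    intro i
    rw [hspan]
    refine ⟨fun j => if j = i then 1 else 0,
      fun j => by by_cases h : j = i <;> simp [h, C.one_mem, C.zero_mem], ?_⟩
    simp [ite_mul]
  choose c hcC hcrepr using fun i => hmemspan i
  set m' : Fin k' → K := fun j => ∑ i, m i * c i j with hm'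
  have hm'M : ∀ j, m' j ∈ M :=
    fun j => Subfield.sum_mem M fun i _ => M.mul_mem (hm i) (hCM (hcC i j))
  have hrw : ∑ i, m i * ℓ i = ∑ j, m' j * ℓ' j := by
    calc ∑ i, m i * ℓ i = ∑ i, ∑ j, m i * (c i j * ℓ' j) := by
          refine Finset.sum_congr rfl fun i _ => ?_
          rw [hcrepr i, Finset.mul_sum]
      _ = ∑ j, ∑ i, m i * (c i j * ℓ' j) := Finset.sum_comm
      _ = ∑ j, m' j * ℓ' j := by
          refine Finset.sum_congr rfl fun j _ => ?_
          rw [hm', Finset.sum_mul]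
          exact Finset.sum_congr rfl fun i _ => by ring
  have hval := sep_lift v C L M hCL hCM hΓ hres (fun j => (hℓ' j).1) (fun j => (hℓ' j).2)
    hsep hgood m' hm'M
  rw [hrw] at hp0 ⊢
  have htop : v (∑ j, m' j * ℓ' j) ≠ ⊤ := v.ne_top_iff.mpr hp0
  have huniv : (Finset.univ : Finset (Fin k')).Nonempty := by
    rcases Finset.eq_empty_or_nonempty (Finset.univ : Finset (Fin k')) with he | h
    · exfalso; apply htop; rw [hval, he, Finset.inf_empty]
    · exact h
  obtain ⟨j, -, hj⟩ := Finset.exists_mem_eq_inf Finset.univ huniv fun j => v (m' j * ℓ' j)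
  have hvp : v (∑ j, m' j * ℓ' j) = v (m' j * ℓ' j) := by rw [hval, hj]
  have hm'0 : m' j ≠ 0 := by
    intro h0
    apply htop
    rw [hvp, h0, zero_mul, AddValuation.map_zero]
  exact ⟨ℓ' j, (hℓ' j).1, m' j, hm'M j, (hℓ' j).2, hm'0, by
    rw [hvp, AddValuation.map_mul, add_comm]⟩

/-- under the hypotheses of the separated basis lifting lemma, the value
group of the compositum `LM` is the subgroup generated by `Γ_L` and `Γ_M`
(which, for subgroups of an abelian group, is the set of sums). -/
theorem value_group_of_compositum
    (v : AddValuation K Γ) (C L M : Subfield K) (hCL : C ≤ L) (hCM : C ≤ M)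
    (hΓ : valGroup v L ∩ valGroup v M = valGroup v C)
    (hres : ResLinDisjoint v C L M)
    (hgsb : GoodSepBasisProp v C L) :
    valGroup v (Subfield.closure ((L : Set K) ∪ (M : Set K))) =
      {g : Γ | ∃ a ∈ valGroup v L, ∃ b ∈ valGroup v M, g = a + b} := by
  ext g
  simp only [Set.mem_setOf_eq]
  constructor
  · rintro ⟨x, hx, hx0, rfl⟩
    rw [Subfield.mem_closure_iff] at hx
    obtain ⟨p, hp, q, hq, rfl⟩ := hx
    have hq0 : q ≠ 0 := by rintro rfl; rw [div_zero] at hx0; exact hx0 rfl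
    have hp0 : p ≠ 0 := by rintro rfl; rw [zero_div] at hx0; exact hx0 rfl
    obtain ⟨x₁, hx₁L, y₁, hy₁M, hx₁0, hy₁0, hvp⟩ :=
      val_of_ring_elt v C L M hCL hCM hΓ hres hgsb hp hp0
    obtain ⟨x₂, hx₂L, y₂, hy₂M, hx₂0, hy₂0, hvq⟩ :=
      val_of_ring_elt v C L M hCL hCM hΓ hres hgsb hq hq0
    refine ⟨v (x₁ / x₂), ⟨x₁ / x₂, L.div_mem hx₁L hx₂L, div_ne_zero hx₁0 hx₂0, rfl⟩,
      v (y₁ / y₂), ⟨y₁ / y₂, M.div_mem hy₁M hy₂M, div_ne_zero hy₁0 hy₂0, rfl⟩, ?_⟩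
    have hk : p / q = (x₁ / x₂ * (y₁ / y₂)) * ((p / (x₁ * y₁)) * ((x₂ * y₂) / q)) := by
      field_simp
    have h1 : v (p / (x₁ * y₁)) = 0 := by
      rw [AddValuation.map_div, AddValuation.map_mul, ← hvp,
        aux_sub_self (v.ne_top_iff.mpr hp0)]
    have h2 : v ((x₂ * y₂) / q) = 0 := by
      rw [AddValuation.map_div, AddValuation.map_mul, ← hvq, aux_sub_self]
      rw [hvq, ← AddValuation.map_mul]
      exact v.ne_top_iff.mpr (mul_ne_zero hx₂0 hy₂0)
    rw [hk, AddValuation.map_mul, AddValuation.map_mul, AddValuation.map_mul, h1, h2,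
      add_zero, add_zero]
  · rintro ⟨aγ, ⟨x, hxL, hx0, rfl⟩, bγ, ⟨y, hyM, hy0, rfl⟩, rfl⟩
    exact ⟨x * y,
      Subfield.mul_mem _ (Subfield.subset_closure (Or.inl hxL))
        (Subfield.subset_closure (Or.inr hyM)),
      mul_ne_zero hx0 hy0, v.map_mul x y⟩


end ResidueFieldDomination
end

section
/- Let C ⊆ L ∩ M be valued fields inside a common valued field. Assume Γ_L ∩ Γ_M = Γ_C, k_L and k_M are linearly disjoint over k_C, and L has the good separated basis property over C. Then the residue field k_{LM} of the compositum LM is the field generated by k_L and k_M over k_C. -/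
open scoped BigOperators

namespace ResidueFieldDomination

variable {K : Type*} [Field K] {Γ : Type*} [LinearOrderedAddCommGroupWithTop Γ]

/-- The valuation ring of a valued subfield, as a subset of `K`. -/
def ints (v : AddValuation K Γ) (F : Subfield K) : Set K :=
  {x | x ∈ F ∧ 0 ≤ v x}

/-! ### Helper lemmas about `Γ` -/

open LinearOrderedAddCommGroupWithTop in
lemma add_right_cancel'' {a b c : Γ} (ha : a ≠ ⊤) (h : b + a = c + a) : b = c := by
  have h2 := congrArg (· + -a) h
  rwa [add_assoc, add_assoc, add_neg_cancel_of_ne_top ha, add_zero, add_zero] at h2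

open LinearOrderedAddCommGroupWithTop in
lemma add_lt_add_right'' {a b : Γ} (h : a < b) {c : Γ} (hc : c ≠ ⊤) : a + c < b + c :=
  lt_of_le_of_ne (add_le_add_left h.le c) fun he => h.ne (add_right_cancel'' hc he)

open LinearOrderedAddCommGroupWithTop in
lemma pos_of_add_lt'' {w x : Γ} (h : w < x + w) : 0 < x := by
  by_contra hx
  push_neg at hx
  exact absurd ((add_le_add_left hx w).trans_eq (zero_add w)) h.not_ge

open LinearOrderedAddCommGroupWithTop in
lemma grp_rearrange {a b c d : Γ} (ha : a ≠ ⊤) (hd : d ≠ ⊤)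
    (h : a + b = c + d) : b + -d = c + -a := by
  have hda : d + a ≠ ⊤ := by simp [ha, hd]
  apply add_right_cancel'' hda
  have kd : -d + d = 0 := by rw [add_comm]; exact add_neg_cancel_of_ne_top hd
  have ka : -a + a = 0 := by rw [add_comm]; exact add_neg_cancel_of_ne_top ha
  calc b + -d + (d + a) = b + (-d + (d + a)) := by rw [add_assoc]
    _ = b + ((-d + d) + a) := by rw [add_assoc]
    _ = b + a := by rw [kd, zero_add]
    _ = a + b := add_comm _ _
    _ = c + d := h
    _ = c + (-a + a) + d := by rw [ka, add_zero]
    _ = c + -a + (a + d) := by rw [add_assoc, add_assoc, add_assoc]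
    _ = c + -a + (d + a) := by rw [add_comm a d]

lemma v_ne_top (v : AddValuation K Γ) {x : K} (hx : x ≠ 0) : v x ≠ ⊤ :=
  (AddValuation.ne_top_iff v).mpr hx

lemma v_nonzero (v : AddValuation K Γ) {x : K} (hx : v x ≠ ⊤) : x ≠ 0 := by
  rintro rfl; exact hx (AddValuation.map_zero v)

lemma mem_valGroup (v : AddValuation K Γ) {F : Subfield K} {x y : K}
    (hx : x ∈ F) (hy : y ∈ F) (hx0 : x ≠ 0) (hy0 : y ≠ 0) :
    v x - v y ∈ valGroup v F :=
  ⟨x / y, div_mem hx hy, div_ne_zero hx0 hy0, AddValuation.map_div v⟩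

/-- Claim 1: if two terms have the same (finite) value, the `ℓ`-values agree. -/
lemma val_eq_of_good (v : AddValuation K Γ) (C L M : Subfield K)
    (hΓ : valGroup v L ∩ valGroup v M = valGroup v C)
    {kk : ℕ} {ℓ : Fin kk → K} (hℓ : ∀ i, ℓ i ∈ L ∧ ℓ i ≠ 0) (hgood : GoodOver v C ℓ)
    (p q : Fin kk) {mp mq : K} (hmp : mp ∈ M) (hmq : mq ∈ M)
    (h : v mp + v (ℓ p) = v mq + v (ℓ q)) (htop : v mp + v (ℓ p) ≠ ⊤) :
    v (ℓ p) = v (ℓ q) ∧ v mp = v mq := by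
  have h1 : v mp ≠ ⊤ ∧ v (ℓ p) ≠ ⊤ := by
    constructor <;> (intro hh; exact htop (by simp [hh]))
  have h2 : v mq ≠ ⊤ ∧ v (ℓ q) ≠ ⊤ := by
    rw [h] at htop
    constructor <;> (intro hh; exact htop (by simp [hh]))
  have hmp0 : mp ≠ 0 := v_nonzero v h1.1
  have hmq0 : mq ≠ 0 := v_nonzero v h2.1
  have key : v (ℓ p) + -(v (ℓ q)) = v mq + -(v mp) := grp_rearrange h1.1 h2.2 h
  have hvl : v (ℓ p) = v (ℓ q) := by
    rcases hgood p q with heq | hnot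
    · exact heq
    · exfalso
      apply hnot
      rw [← hΓ]
      constructor
      · exact mem_valGroup v (hℓ p).1 (hℓ q).1 (hℓ p).2 (hℓ q).2
      · have : v (ℓ p) - v (ℓ q) = v mq - v mp := by
          rw [sub_eq_add_neg, sub_eq_add_neg, key]
        rw [this]
        exact mem_valGroup v hmq hmp hmq0 hmp0
  refine ⟨hvl, ?_⟩
  rw [hvl] at h
  exact add_right_cancel'' h2.2 h

/-- Reindexing a sum over a finset via `orderIsoOfFin`. -/
lemma sum_orderIso {kk : ℕ} (S : Finset (Fin kk)) (f : Fin kk → K) :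
    ∑ j : Fin S.card, f ((S.orderIsoOfFin rfl j : Fin kk)) = ∑ i ∈ S, f i := by
  rw [← Finset.sum_coe_sort S f]
  exact Fintype.sum_equiv (S.orderIsoOfFin rfl).toEquiv _ _ fun j => rfl

/-- The separated-basis lifting lemma: a good separated tuple over `C` is
separated over `M`. -/
lemma sepOver_lift (v : AddValuation K Γ) (C L M : Subfield K)
    (hΓ : valGroup v L ∩ valGroup v M = valGroup v C)
    (hres : ResLinDisjoint v C L M)
    {kk : ℕ} (ℓ : Fin kk → K) (hℓ : ∀ i, ℓ i ∈ L ∧ ℓ i ≠ 0)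
    (hsep : SepOver v C ℓ) (hgood : GoodOver v C ℓ) : SepOver v M ℓ := by
  intro c hc
  set γ := Finset.univ.inf fun i => v (c i * ℓ i) with hγdef
  have hge : γ ≤ v (∑ i, c i * ℓ i) :=
    AddValuation.map_le_sum v fun i _ => Finset.inf_le (Finset.mem_univ i)
  by_cases hγtop : γ = ⊤
  · have : ∀ i : Fin kk, c i * ℓ i = 0 := by
      intro i
      have := (Finset.inf_eq_top_iff _ _).1 hγtop i (Finset.mem_univ i)
      exact (AddValuation.top_iff v).1 this
    rw [hγtop]
    have : (∑ i, c i * ℓ i) = 0 := Finset.sum_eq_zero fun i _ => this i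
    rw [this, AddValuation.map_zero]
  by_contra hne
  have hlt : γ < v (∑ i, c i * ℓ i) := lt_of_le_of_ne hge fun h => hne h.symm
  -- univ is nonempty
  have huniv : (Finset.univ : Finset (Fin kk)).Nonempty := by
    rcases (Finset.univ : Finset (Fin kk)).eq_empty_or_nonempty with h | h
    · exfalso; apply hγtop; rw [hγdef, h, Finset.inf_empty]
    · exact h
  obtain ⟨i₀, -, hi₀⟩ := Finset.exists_mem_eq_inf Finset.univ huniv fun i => v (c i * ℓ i)
  have hγi₀ : v (c i₀ * ℓ i₀) = γ := hi₀.symm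
  have hγntop : v (c i₀ * ℓ i₀) ≠ ⊤ := by rw [hγi₀]; exact hγtop
  have hci₀0 : c i₀ ≠ 0 := by
    intro h; exact hγntop (by simp [h, AddValuation.map_zero])
  have hℓi₀top : v (ℓ i₀) ≠ ⊤ := v_ne_top v (hℓ i₀).2
  have hci₀top : v (c i₀) ≠ ⊤ := v_ne_top v hci₀0
  set S : Finset (Fin kk) := Finset.univ.filter (fun i => v (c i * ℓ i) = γ) with hSdef
  have hi₀S : i₀ ∈ S := Finset.mem_filter.2 ⟨Finset.mem_univ _, hγi₀⟩
  -- Claim 1 instances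
  have hclaim : ∀ i ∈ S, v (ℓ i) = v (ℓ i₀) ∧ v (c i) = v (c i₀) := by
    intro i hi
    have hiv : v (c i * ℓ i) = γ := (Finset.mem_filter.1 hi).2
    apply val_eq_of_good v C L M hΓ hℓ hgood i i₀ (hc i) (hc i₀)
    · rw [← AddValuation.map_mul, ← AddValuation.map_mul, hiv, hγi₀]
    · rw [← AddValuation.map_mul, hiv]; exact hγtop
  set n := S.card with hn
  set e := S.orderIsoOfFin rfl with he
  set a : Fin n → K := fun j => ℓ (e j : Fin kk) * (ℓ i₀)⁻¹ with ha
  have haL : ∀ j, a j ∈ L ∧ 0 ≤ v (a j) := by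
    intro j
    have hmem : (e j : Fin kk) ∈ S := (e j).2
    constructor
    · exact mul_mem (hℓ _).1 (inv_mem (hℓ i₀).1)
    · rw [ha]
      dsimp only
      rw [AddValuation.map_mul, AddValuation.map_inv, (hclaim _ hmem).1,
        LinearOrderedAddCommGroupWithTop.add_neg_cancel_of_ne_top hℓi₀top]
  have hindepC : ResIndepOver v C a := by
    intro d hd hsum j
    classical
    set d' : Fin kk → K := fun i => if h : i ∈ S then d (e.symm ⟨i, h⟩) else 0 with hd'
    have hd'C : ∀ i, d' i ∈ C := by
      intro i; rw [hd']; dsimp only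
      split
      · exact (hd _).1
      · exact zero_mem C
    have hd'apply : ∀ j : Fin n, d' ((e j : {x // x ∈ S}) : Fin kk) = d j := by
      intro j
      have hj : ((e j : {x // x ∈ S}) : Fin kk) ∈ S := (e j).2
      rw [hd']; dsimp only; rw [dif_pos hj]
      congr 1
      have h5 : (⟨((e j : {x // x ∈ S}) : Fin kk), hj⟩ : {x // x ∈ S}) = e j :=
        Subtype.ext rfl
      rw [h5, e.symm_apply_apply]
    have hsum1 : ∑ i, d' i * ℓ i = ∑ j, d j * ℓ (e j : Fin kk) := by
      rw [← Finset.sum_subset (Finset.subset_univ S) (fun i _ hi => by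
        rw [hd']; dsimp only; rw [dif_neg hi, zero_mul])]
      rw [← Finset.sum_coe_sort S (fun i => d' i * ℓ i)]
      refine (Fintype.sum_equiv e.toEquiv _ _ fun j => ?_).symm
      show d j * ℓ ((e j : {x // x ∈ S}) : Fin kk) =
        d' ((e j : {x // x ∈ S}) : Fin kk) * ℓ ((e j : {x // x ∈ S}) : Fin kk)
      rw [hd'apply j]
    have hX : v (ℓ i₀) < v (∑ j, d j * ℓ (e j : Fin kk)) := by
      have hfac : (∑ j, d j * a j) = (∑ j, d j * ℓ (e j : Fin kk)) * (ℓ i₀)⁻¹ := by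
        rw [Finset.sum_mul]
        exact Finset.sum_congr rfl fun j _ => by rw [ha]; ring
      have h1 : (0 : Γ) < v ((∑ j, d j * ℓ (e j : Fin kk)) * (ℓ i₀)⁻¹) := by
        rw [← hfac]; exact hsum
      have h2 : v (∑ j, d j * ℓ (e j : Fin kk)) =
          v ((∑ j, d j * ℓ (e j : Fin kk)) * (ℓ i₀)⁻¹) + v (ℓ i₀) := by
        rw [AddValuation.map_mul, AddValuation.map_inv, add_assoc,
          add_comm (-(v (ℓ i₀))) (v (ℓ i₀)),
          LinearOrderedAddCommGroupWithTop.add_neg_cancel_of_ne_top hℓi₀top, add_zero]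
      rw [h2]
      calc v (ℓ i₀) = 0 + v (ℓ i₀) := (zero_add _).symm
        _ < _ := add_lt_add_right'' h1 hℓi₀top
    have hsep' := hsep d' hd'C
    rw [hsum1] at hsep'
    have hterm : v (∑ j, d j * ℓ (e j : Fin kk)) ≤ v (d' (e j : Fin kk) * ℓ (e j : Fin kk)) := by
      rw [hsep']
      exact Finset.inf_le (Finset.mem_univ _)
    have hj : (e j : Fin kk) ∈ S := (e j).2
    rw [hd'apply j, AddValuation.map_mul] at hterm
    have hw : v (ℓ (e j : Fin kk)) < v (d j) + v (ℓ (e j : Fin kk)) := by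
      calc v (ℓ (e j : Fin kk)) = v (ℓ i₀) := (hclaim _ hj).1
        _ < _ := hX.trans_le hterm
    exact pos_of_add_lt'' hw
  have hindepM : ResIndepOver v M a := hres n a haL hindepC
  -- apply with coefficients c (e j) * (c i₀)⁻¹
  set c'' : Fin n → K := fun j => c (e j : Fin kk) * (c i₀)⁻¹ with hc''
  have hc''M : ∀ j, c'' j ∈ M ∧ 0 ≤ v (c'' j) := by
    intro j
    have hj : (e j : Fin kk) ∈ S := (e j).2
    refine ⟨mul_mem (hc _) (inv_mem (hc i₀)), ?_⟩
    rw [hc'']; dsimp only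
    rw [AddValuation.map_mul, AddValuation.map_inv, (hclaim _ hj).2,
      LinearOrderedAddCommGroupWithTop.add_neg_cancel_of_ne_top hci₀top]
  have hsumpos : 0 < v (∑ j, c'' j * a j) := by
    have hfac : (∑ j, c'' j * a j) = (∑ i ∈ S, c i * ℓ i) * (c i₀ * ℓ i₀)⁻¹ := by
      rw [← sum_orderIso S (fun i => c i * ℓ i), Finset.sum_mul]
      refine Finset.sum_congr rfl fun j _ => ?_
      rw [hc'', ha]; dsimp only
      rw [mul_inv]
      ring
    rw [hfac]
    have hrest : γ < v (∑ i ∈ Finset.univ.filter (fun i => ¬ v (c i * ℓ i) = γ), c i * ℓ i) := by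
      apply AddValuation.map_lt_sum v hγtop
      intro i hi
      have h1 : γ ≤ v (c i * ℓ i) := Finset.inf_le (Finset.mem_univ i)
      have h2 : v (c i * ℓ i) ≠ γ := (Finset.mem_filter.1 hi).2
      exact lt_of_le_of_ne h1 (Ne.symm h2)
    have hsplit : (∑ i ∈ S, c i * ℓ i) +
        (∑ i ∈ Finset.univ.filter (fun i => ¬ v (c i * ℓ i) = γ), c i * ℓ i)
        = ∑ i, c i * ℓ i := by
      rw [hSdef]
      exact Finset.sum_filter_add_sum_filter_not _ _ _
    have hSval : γ < v (∑ i ∈ S, c i * ℓ i) := by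
      have : (∑ i ∈ S, c i * ℓ i) = (∑ i, c i * ℓ i) -
          (∑ i ∈ Finset.univ.filter (fun i => ¬ v (c i * ℓ i) = γ), c i * ℓ i) := by
        rw [eq_sub_iff_add_eq]; exact hsplit
      rw [this]
      calc γ < min (v (∑ i, c i * ℓ i))
            (v (∑ i ∈ Finset.univ.filter (fun i => ¬ v (c i * ℓ i) = γ), c i * ℓ i)) :=
            lt_min hlt hrest
        _ ≤ _ := AddValuation.map_sub v _ _
    rw [AddValuation.map_mul, AddValuation.map_inv, hγi₀]
    have hγnegtop : -γ ≠ ⊤ := by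
      rw [ne_eq, LinearOrderedAddCommGroupWithTop.neg_eq_top]; exact hγtop
    calc (0 : Γ) = γ + -γ :=
          (LinearOrderedAddCommGroupWithTop.add_neg_cancel_of_ne_top hγtop).symm
      _ < v (∑ i ∈ S, c i * ℓ i) + -γ := add_lt_add_right'' hSval hγnegtop
  have hall := hindepM c'' hc''M hsumpos
  -- contradiction at j₀ = e.symm ⟨i₀, hi₀S⟩
  have := hall (e.symm ⟨i₀, hi₀S⟩)
  rw [hc''] at this
  dsimp only at this
  rw [show ((e (e.symm ⟨i₀, hi₀S⟩) : {x // x ∈ S}) : Fin kk) = i₀ by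
    rw [e.apply_symm_apply]] at this
  rw [mul_inv_cancel₀ hci₀0, AddValuation.map_one] at this
  exact lt_irrefl _ this

/-- Every element of the ring generated by `L ∪ M` is a finite sum `∑ mᵢ lᵢ`. -/
lemma exists_repr (L M : Subfield K) {x : K}
    (hx : x ∈ Subring.closure ((L : Set K) ∪ (M : Set K))) :
    ∃ (n : ℕ) (l m : Fin n → K), (∀ i, l i ∈ L) ∧ (∀ i, m i ∈ M) ∧ x = ∑ i, m i * l i := by
  induction hx using Subring.closure_induction with
  | mem x hx =>
      rcases hx with hx | hx
      · exact ⟨1, fun _ => x, fun _ => 1, fun _ => hx, fun _ => one_mem M, by simp⟩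
      · exact ⟨1, fun _ => 1, fun _ => x, fun _ => one_mem L, fun _ => hx, by simp⟩
  | zero => exact ⟨0, fun i => i.elim0, fun i => i.elim0, fun i => i.elim0,
      fun i => i.elim0, by simp⟩
  | one => exact ⟨1, fun _ => 1, fun _ => 1, fun _ => one_mem L, fun _ => one_mem M, by simp⟩
  | add x y hx hy ihx ihy =>
      obtain ⟨n₁, l₁, m₁, hl₁, hm₁, hx1⟩ := ihx
      obtain ⟨n₂, l₂, m₂, hl₂, hm₂, hy1⟩ := ihy
      refine ⟨n₁ + n₂, Fin.append l₁ l₂, Fin.append m₁ m₂, ?_, ?_, ?_⟩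
      · exact fun i => Fin.addCases (fun j => by rw [Fin.append_left]; exact hl₁ j)
          (fun j => by rw [Fin.append_right]; exact hl₂ j) i
      · exact fun i => Fin.addCases (fun j => by rw [Fin.append_left]; exact hm₁ j)
          (fun j => by rw [Fin.append_right]; exact hm₂ j) i
      · rw [Fin.sum_univ_add]
        simp only [Fin.append_left, Fin.append_right]
        rw [← hx1, ← hy1]
  | neg x hx ih =>
      obtain ⟨n₁, l₁, m₁, hl₁, hm₁, hx1⟩ := ih
      exact ⟨n₁, l₁, fun i => -(m₁ i), hl₁, fun i => neg_mem (hm₁ i),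
        by simp [neg_mul, hx1]⟩
  | mul x y hx hy ihx ihy =>
      obtain ⟨n₁, l₁, m₁, hl₁, hm₁, hx1⟩ := ihx
      obtain ⟨n₂, l₂, m₂, hl₂, hm₂, hy1⟩ := ihy
      refine ⟨n₁ * n₂, fun q => l₁ (finProdFinEquiv.symm q).1 * l₂ (finProdFinEquiv.symm q).2,
        fun q => m₁ (finProdFinEquiv.symm q).1 * m₂ (finProdFinEquiv.symm q).2,
        fun q => mul_mem (hl₁ _) (hl₂ _), fun q => mul_mem (hm₁ _) (hm₂ _), ?_⟩
      calc x * y = (∑ i, m₁ i * l₁ i) * (∑ j, m₂ j * l₂ j) := by rw [hx1, hy1]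
        _ = ∑ i, ∑ j, (m₁ i * l₁ i) * (m₂ j * l₂ j) := Finset.sum_mul_sum _ _ _ _
        _ = ∑ p : Fin n₁ × Fin n₂, (m₁ p.1 * l₁ p.1) * (m₂ p.2 * l₂ p.2) := by
            rw [Fintype.sum_prod_type]
        _ = ∑ p : Fin n₁ × Fin n₂,
              (m₁ p.1 * m₂ p.2) * (l₁ p.1 * l₂ p.2) :=
            Finset.sum_congr rfl fun p _ => by ring
        _ = ∑ q : Fin (n₁ * n₂),
              (m₁ (finProdFinEquiv.symm q).1 * m₂ (finProdFinEquiv.symm q).2) *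
              (l₁ (finProdFinEquiv.symm q).1 * l₂ (finProdFinEquiv.symm q).2) :=
            (Equiv.sum_comp finProdFinEquiv.symm
              (fun p : Fin n₁ × Fin n₂ => (m₁ p.1 * m₂ p.2) * (l₁ p.1 * l₂ p.2))).symm

lemma mem_spanIn_self (C : Subfield K) {n : ℕ} (a : Fin n → K) (i : Fin n) :
    a i ∈ spanIn C a := by
  classical
  refine ⟨fun q => if q = i then 1 else 0, fun q => ?_, ?_⟩
  · by_cases h : q = i
    · simp only [h, if_pos rfl]; exact one_mem C
    · simp only [if_neg h]; exact zero_mem C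
  · simp [ite_mul]

lemma repr_in_basis (C M : Subfield K) (hCM : C ≤ M) {kk n : ℕ} (ℓ : Fin kk → K)
    (l m : Fin n → K) (hl : ∀ i, l i ∈ spanIn C ℓ) (hm : ∀ i, m i ∈ M) :
    ∃ Mt : Fin kk → K, (∀ p, Mt p ∈ M) ∧ ∑ i, m i * l i = ∑ p, Mt p * ℓ p := by
  choose c hc hrepr using hl
  refine ⟨fun p => ∑ i, m i * c i p,
    fun p => sum_mem fun i _ => mul_mem (hm i) (hCM (hc i p)), ?_⟩
  calc ∑ i, m i * l i = ∑ i, ∑ p, m i * (c i p * ℓ p) := by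
        refine Finset.sum_congr rfl fun i _ => ?_
        rw [hrepr i, Finset.mul_sum]
    _ = ∑ p, ∑ i, m i * (c i p * ℓ p) := Finset.sum_comm
    _ = ∑ p, (∑ i, m i * c i p) * ℓ p := by
        refine Finset.sum_congr rfl fun p _ => ?_
        rw [Finset.sum_mul]
        exact Finset.sum_congr rfl fun i _ => by ring

/-- under the hypotheses of the separated basis lifting lemma, the residue
field of the compositum `LM` is the field generated by `k_L` and `k_M` over `k_C`:
every residue of an integer of `LM` is the residue of a quotient of two elements of the
ring generated by the integers of `L` and of `M`. -/
theorem residue_field_of_compositum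
    (v : AddValuation K Γ) (C L M : Subfield K) (hCL : C ≤ L) (hCM : C ≤ M)
    (hΓ : valGroup v L ∩ valGroup v M = valGroup v C)
    (hres : ResLinDisjoint v C L M)
    (hgsb : GoodSepBasisProp v C L) :
    ∀ x ∈ Subfield.closure ((L : Set K) ∪ (M : Set K)), 0 ≤ v x →
      ∃ a b : K, a ∈ Subring.closure (ints v L ∪ ints v M) ∧
        b ∈ Subring.closure (ints v L ∪ ints v M) ∧ v b = 0 ∧
        0 < v (x - a * b⁻¹) := by
  intro x hx hvx
  classical
  by_cases hx0 : x = 0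
  · refine ⟨0, 1, zero_mem _, one_mem _, AddValuation.map_one v, ?_⟩
    have h1 : x - 0 * 1⁻¹ = 0 := by rw [hx0]; ring
    rw [h1, AddValuation.map_zero]
    exact lt_of_le_of_ne le_top (Ne.symm LinearOrderedAddCommGroupWithTop.top_ne_zero)
  rw [Subfield.mem_closure_iff] at hx
  obtain ⟨s, hs, t, ht, hst⟩ := hx
  have ht0 : t ≠ 0 := by rintro rfl; rw [div_zero] at hst; exact hx0 hst.symm
  have hs0 : s ≠ 0 := by rintro rfl; rw [zero_div] at hst; exact hx0 hst.symm
  obtain ⟨n₁, l₁, m₁, hl₁, hm₁, hts⟩ := exists_repr L M ht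
  obtain ⟨n₂, l₂, m₂, hl₂, hm₂, hss⟩ := exists_repr L M hs
  obtain ⟨kk, ℓ, hℓ, hspan, hsepC, hgood⟩ := hgsb (n₁ + n₂) (Fin.append l₁ l₂)
    (fun i => Fin.addCases (fun j => by rw [Fin.append_left]; exact hl₁ j)
      (fun j => by rw [Fin.append_right]; exact hl₂ j) i)
  have hsepM : SepOver v M ℓ := sepOver_lift v C L M hΓ hres ℓ hℓ hsepC hgood
  have hlin₁ : ∀ i : Fin n₁, l₁ i ∈ spanIn C ℓ := fun i => by
    rw [hspan]
    have h := mem_spanIn_self C (Fin.append l₁ l₂) (Fin.castAdd n₂ i)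
    rwa [Fin.append_left] at h
  have hlin₂ : ∀ i : Fin n₂, l₂ i ∈ spanIn C ℓ := fun i => by
    rw [hspan]
    have h := mem_spanIn_self C (Fin.append l₁ l₂) (Fin.natAdd n₁ i)
    rwa [Fin.append_right] at h
  obtain ⟨Mt, hMt, htdec⟩ := repr_in_basis C M hCM ℓ l₁ m₁ hlin₁ hm₁
  obtain ⟨Ms, hMs, hsdec⟩ := repr_in_basis C M hCM ℓ l₂ m₂ hlin₂ hm₂
  have htd : t = ∑ p, Mt p * ℓ p := hts.trans htdec
  have hsd : s = ∑ p, Ms p * ℓ p := hss.trans hsdec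
  have hvt : v t = Finset.univ.inf fun p => v (Mt p * ℓ p) := by rw [htd]; exact hsepM Mt hMt
  have hvs : v s = Finset.univ.inf fun p => v (Ms p * ℓ p) := by rw [hsd]; exact hsepM Ms hMs
  have hγtop : v t ≠ ⊤ := v_ne_top v ht0
  have hvs_ge : v t ≤ v s := by
    have hxs : s = x * t := (div_eq_iff ht0).1 hst
    rw [hxs, AddValuation.map_mul]
    calc v t = 0 + v t := (zero_add _).symm
      _ ≤ v x + v t := add_le_add_left hvx _
  have huniv : (Finset.univ : Finset (Fin kk)).Nonempty := by
    rcases (Finset.univ : Finset (Fin kk)).eq_empty_or_nonempty with h | h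
    · exfalso; apply hγtop; rw [hvt, h, Finset.inf_empty]
    · exact h
  obtain ⟨p₀, -, hp₀⟩ := Finset.exists_mem_eq_inf Finset.univ huniv fun p => v (Mt p * ℓ p)
  set u := Mt p₀ * ℓ p₀ with hu
  have hup : v u = v t := by rw [hu, hvt]; exact hp₀.symm
  have hu0 : u ≠ 0 := v_nonzero v (by rw [hup]; exact hγtop)
  have hMt0 : Mt p₀ ≠ 0 := left_ne_zero_of_mul hu0
  have hℓ0 : ℓ p₀ ≠ 0 := (hℓ p₀).2
  have hMttop : v (Mt p₀) ≠ ⊤ := v_ne_top v hMt0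
  have hℓtop : v (ℓ p₀) ≠ ⊤ := v_ne_top v hℓ0
  have hclaimt : ∀ p, v (Mt p * ℓ p) = v t →
      v (ℓ p) = v (ℓ p₀) ∧ v (Mt p) = v (Mt p₀) := by
    intro p hp
    apply val_eq_of_good v C L M hΓ hℓ hgood p p₀ (hMt p) (hMt p₀)
    · rw [← AddValuation.map_mul, ← AddValuation.map_mul, hp, ← hu, hup]
    · rw [← AddValuation.map_mul, hp]; exact hγtop
  have hclaims : ∀ p, v (Ms p * ℓ p) = v t →
      v (ℓ p) = v (ℓ p₀) ∧ v (Ms p) = v (Mt p₀) := by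
    intro p hp
    apply val_eq_of_good v C L M hΓ hℓ hgood p p₀ (hMs p) (hMt p₀)
    · rw [← AddValuation.map_mul, ← AddValuation.map_mul, hp, ← hu, hup]
    · rw [← AddValuation.map_mul, hp]; exact hγtop
  set St := Finset.univ.filter (fun p => v (Mt p * ℓ p) = v t) with hStdef
  set Ss := Finset.univ.filter (fun p => v (Ms p * ℓ p) = v t) with hSsdef
  set bb := ∑ p ∈ St, Mt p * (Mt p₀)⁻¹ * (ℓ p * (ℓ p₀)⁻¹) with hbb
  set aa := ∑ p ∈ Ss, Ms p * (Mt p₀)⁻¹ * (ℓ p * (ℓ p₀)⁻¹) with haa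
  -- memberships
  have hmemb : bb ∈ Subring.closure (ints v L ∪ ints v M) := by
    rw [hbb]
    apply Subring.sum_mem
    intro p hp
    have hp' : v (Mt p * ℓ p) = v t := (Finset.mem_filter.1 hp).2
    have hv1 : v (Mt p * (Mt p₀)⁻¹) = 0 := by
      rw [AddValuation.map_mul, AddValuation.map_inv, (hclaimt p hp').2,
        LinearOrderedAddCommGroupWithTop.add_neg_cancel_of_ne_top hMttop]
    have hv2 : v (ℓ p * (ℓ p₀)⁻¹) = 0 := by
      rw [AddValuation.map_mul, AddValuation.map_inv, (hclaimt p hp').1,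
        LinearOrderedAddCommGroupWithTop.add_neg_cancel_of_ne_top hℓtop]
    exact mul_mem
      (Subring.subset_closure (Or.inr ⟨mul_mem (hMt p) (inv_mem (hMt p₀)), le_of_eq hv1.symm⟩))
      (Subring.subset_closure (Or.inl ⟨mul_mem (hℓ p).1 (inv_mem (hℓ p₀).1), le_of_eq hv2.symm⟩))
  have hmema : aa ∈ Subring.closure (ints v L ∪ ints v M) := by
    rw [haa]
    apply Subring.sum_mem
    intro p hp
    have hp' : v (Ms p * ℓ p) = v t := (Finset.mem_filter.1 hp).2
    have hv1 : v (Ms p * (Mt p₀)⁻¹) = 0 := by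
      rw [AddValuation.map_mul, AddValuation.map_inv, (hclaims p hp').2,
        LinearOrderedAddCommGroupWithTop.add_neg_cancel_of_ne_top hMttop]
    have hv2 : v (ℓ p * (ℓ p₀)⁻¹) = 0 := by
      rw [AddValuation.map_mul, AddValuation.map_inv, (hclaims p hp').1,
        LinearOrderedAddCommGroupWithTop.add_neg_cancel_of_ne_top hℓtop]
    exact mul_mem
      (Subring.subset_closure (Or.inr ⟨mul_mem (hMs p) (inv_mem (hMt p₀)), le_of_eq hv1.symm⟩))
      (Subring.subset_closure (Or.inl ⟨mul_mem (hℓ p).1 (inv_mem (hℓ p₀).1), le_of_eq hv2.symm⟩))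
  -- error sums
  have hnegtop : -(v t) ≠ ⊤ := by
    rw [ne_eq, LinearOrderedAddCommGroupWithTop.neg_eq_top]; exact hγtop
  have hEt : v t < v (∑ p ∈ Finset.univ.filter (fun p => ¬ v (Mt p * ℓ p) = v t),
      Mt p * ℓ p) := by
    apply AddValuation.map_lt_sum v hγtop
    intro p hp
    have h1 : v t ≤ v (Mt p * ℓ p) := by rw [hvt]; exact Finset.inf_le (Finset.mem_univ p)
    exact lt_of_le_of_ne h1 (Ne.symm (Finset.mem_filter.1 hp).2)
  have hEs : v t < v (∑ p ∈ Finset.univ.filter (fun p => ¬ v (Ms p * ℓ p) = v t),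
      Ms p * ℓ p) := by
    apply AddValuation.map_lt_sum v hγtop
    intro p hp
    have h1 : v t ≤ v (Ms p * ℓ p) := by
      refine hvs_ge.trans ?_
      rw [hvs]; exact Finset.inf_le (Finset.mem_univ p)
    exact lt_of_le_of_ne h1 (Ne.symm (Finset.mem_filter.1 hp).2)
  have hTt : (∑ p ∈ St, Mt p * ℓ p) =
      t - ∑ p ∈ Finset.univ.filter (fun p => ¬ v (Mt p * ℓ p) = v t), Mt p * ℓ p := by
    rw [eq_sub_iff_add_eq, hStdef, Finset.sum_filter_add_sum_filter_not, ← htd]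
  have hTs : (∑ p ∈ Ss, Ms p * ℓ p) =
      s - ∑ p ∈ Finset.univ.filter (fun p => ¬ v (Ms p * ℓ p) = v t), Ms p * ℓ p := by
    rw [eq_sub_iff_add_eq, hSsdef, Finset.sum_filter_add_sum_filter_not, ← hsd]
  have hvTt : v (∑ p ∈ St, Mt p * ℓ p) = v t := by
    rw [hTt]; exact AddValuation.map_sub_eq_of_lt_left v hEt
  have hvTs : v t ≤ v (∑ p ∈ Ss, Ms p * ℓ p) := by
    rw [hTs]
    calc v t ≤ min (v s) (v (∑ p ∈ Finset.univ.filter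
          (fun p => ¬ v (Ms p * ℓ p) = v t), Ms p * ℓ p)) := le_min hvs_ge hEs.le
      _ ≤ _ := AddValuation.map_sub v _ _
  have hbbu : bb = (∑ p ∈ St, Mt p * ℓ p) * u⁻¹ := by
    rw [hbb, Finset.sum_mul]
    exact Finset.sum_congr rfl fun p _ => by rw [hu, mul_inv]; ring
  have haau : aa = (∑ p ∈ Ss, Ms p * ℓ p) * u⁻¹ := by
    rw [haa, Finset.sum_mul]
    exact Finset.sum_congr rfl fun p _ => by rw [hu, mul_inv]; ring
  have hvbb : v bb = 0 := by
    rw [hbbu, AddValuation.map_mul, AddValuation.map_inv, hvTt, hup,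
      LinearOrderedAddCommGroupWithTop.add_neg_cancel_of_ne_top hγtop]
  have hvaa : (0 : Γ) ≤ v aa := by
    rw [haau, AddValuation.map_mul, AddValuation.map_inv, hup]
    calc (0 : Γ) = v t + -(v t) :=
          (LinearOrderedAddCommGroupWithTop.add_neg_cancel_of_ne_top hγtop).symm
      _ ≤ _ := add_le_add_left hvTs _
  have hbb0 : bb ≠ 0 := v_nonzero v (by
    rw [hvbb]; exact Ne.symm LinearOrderedAddCommGroupWithTop.top_ne_zero)
  have hbbT : 0 < v (bb - t * u⁻¹) := by
    have h1 : bb - t * u⁻¹ =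
        (-(∑ p ∈ Finset.univ.filter (fun p => ¬ v (Mt p * ℓ p) = v t), Mt p * ℓ p)) * u⁻¹ := by
      rw [hbbu, hTt]; ring
    rw [h1, AddValuation.map_mul, AddValuation.map_neg, AddValuation.map_inv, hup]
    calc (0 : Γ) = v t + -(v t) :=
          (LinearOrderedAddCommGroupWithTop.add_neg_cancel_of_ne_top hγtop).symm
      _ < _ := add_lt_add_right'' hEt hnegtop
  have hSaa : 0 < v (s * u⁻¹ - aa) := by
    have h1 : s * u⁻¹ - aa =
        (∑ p ∈ Finset.univ.filter (fun p => ¬ v (Ms p * ℓ p) = v t), Ms p * ℓ p) * u⁻¹ := by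
      rw [haau, hTs]; ring
    rw [h1, AddValuation.map_mul, AddValuation.map_inv, hup]
    calc (0 : Γ) = v t + -(v t) :=
          (LinearOrderedAddCommGroupWithTop.add_neg_cancel_of_ne_top hγtop).symm
      _ < _ := add_lt_add_right'' hEs hnegtop
  have hvT : v (t * u⁻¹) = 0 := by
    rw [AddValuation.map_mul, AddValuation.map_inv, hup,
      LinearOrderedAddCommGroupWithTop.add_neg_cancel_of_ne_top hγtop]
  refine ⟨aa, bb, hmema, hmemb, hvbb, ?_⟩
  have key : 0 < v (s * u⁻¹ * bb - aa * (t * u⁻¹)) := by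
    have hsplit2 : s * u⁻¹ * bb - aa * (t * u⁻¹) =
        (s * u⁻¹ - aa) * bb + aa * (bb - t * u⁻¹) := by ring
    rw [hsplit2]
    apply AddValuation.map_lt_add v
    · rw [AddValuation.map_mul, hvbb, add_zero]; exact hSaa
    · rw [AddValuation.map_mul]
      calc (0 : Γ) < v (bb - t * u⁻¹) := hbbT
        _ = 0 + v (bb - t * u⁻¹) := (zero_add _).symm
        _ ≤ v aa + v (bb - t * u⁻¹) := add_le_add_left hvaa _
  have hfinal : x - aa * bb⁻¹ =
      (s * u⁻¹ * bb - aa * (t * u⁻¹)) * (t * u⁻¹ * bb)⁻¹ := by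
    rw [← hst]
    field_simp
  rw [hfinal, AddValuation.map_mul, AddValuation.map_inv, AddValuation.map_mul, hvT, hvbb,
    zero_add, neg_zero, add_zero]
  exact key

end ResidueFieldDomination
end

section
/- Let A, B, C be subsets of a monster model (a sufficiently saturated and homogeneous model) of a complete theory, with C ⊆ A ∩ B. If tp(A/C) ⊢ tp(A/B) (i.e., any realization of tp(A/C) realizes tp(A/B)), then tp(B/C) ⊢ tp(B/A). -/
open FirstOrder

namespace TypeImplication

variable {L : FirstOrder.Language} {M : Type*} [L.Structure M]

/-- In a monster model, `tp(a/C) ⊢ tp(a/B)` is equivalent (by homogeneity and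
saturation) to: for every automorphism `σ` fixing `C` pointwise there is an
automorphism `τ` fixing `B` pointwise with `τ ∘ σ` the identity on the tuple `a`. -/
def TpImplies (C B : Set M) {ι : Type*} (a : ι → M) : Prop :=
  ∀ σ : M ≃[L] M, (∀ c ∈ C, σ c = c) →
    ∃ τ : M ≃[L] M, (∀ b ∈ B, τ b = b) ∧ ∀ i, τ (σ (a i)) = a i

/-- for subsets `A`, `B`, `C` of a monster model with `C ⊆ A ∩ B`,
if `tp(A/C) ⊢ tp(A/B)` then `tp(B/C) ⊢ tp(B/A)`. -/
theorem tpImplies_symm (A B C : Set M) (hCA : C ⊆ A) (hCB : C ⊆ B)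
    (h : TpImplies (L := L) C B (fun x : A => (x : M))) :
    TpImplies (L := L) C A (fun x : B => (x : M)) := by
  intro σ hσ
  obtain ⟨τ, hτB, hτA⟩ := h σ.symm (fun c hc => by
    have : σ.symm (σ c) = σ.symm c := by rw [hσ c hc]
    simpa using this.symm)
  refine ⟨Language.Equiv.comp τ σ.symm, fun a ha => ?_, fun b => ?_⟩
  · exact hτA ⟨a, ha⟩
  · simp only [Language.Equiv.comp_apply]
    have : σ.symm (σ (b : M)) = (b : M) := σ.symm_apply_apply _
    rw [this]
    exact hτB b b.2

end TypeImplication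
end

section
/- Let C ⊆ L be valued fields with L henselian and L a regular field extension of C, in residue characteristic 0. Then the residue field k_L is a regular extension of k_C. -/
open scoped BigOperators

namespace ResidueFieldDomination

variable {K : Type*} [Field K] {Γ : Type*} [LinearOrderedAddCommGroupWithTop Γ]

lemma coeff_sum_C_mul_X_pow {R : Type*} [CommRing R] (n : ℕ) (b : Fin (n + 1) → R) (j : ℕ) :
    (∑ i : Fin (n + 1), Polynomial.C (b i) * Polynomial.X ^ (i : ℕ)).coeff j =
      if h : j < n + 1 then b ⟨j, h⟩ else 0 := by
  rw [Polynomial.finset_sum_coeff]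
  simp only [Polynomial.coeff_C_mul, Polynomial.coeff_X_pow, mul_ite, mul_one, mul_zero]
  split_ifs with h
  · rw [Finset.sum_eq_single (⟨j, h⟩ : Fin (n + 1))]
    · rw [if_pos rfl]
    · intro i _ hne
      rw [if_neg]
      exact fun hj => hne (Fin.ext hj.symm)
    · intro habs; exact absurd (Finset.mem_univ _) habs
  · apply Finset.sum_eq_zero
    intro i _
    rw [if_neg]
    intro hj; exact h (hj ▸ i.isLt)

lemma eval_sum_C_mul_X_pow {R : Type*} [CommRing R] (n : ℕ) (b : Fin (n + 1) → R) (x : R) :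
    (∑ i : Fin (n + 1), Polynomial.C (b i) * Polynomial.X ^ (i : ℕ)).eval x
      = ∑ i : Fin (n + 1), b i * x ^ (i : ℕ) := by
  simp [Polynomial.eval_finset_sum]

lemma derivative_eval_sum_C_mul_X_pow {R : Type*} [CommRing R] (n : ℕ)
    (b : Fin (n + 1) → R) (x : R) :
    (Polynomial.derivative (∑ i : Fin (n + 1), Polynomial.C (b i) * Polynomial.X ^ (i : ℕ))).eval x
      = ∑ i : Fin (n + 1), b i * (i : ℕ) * x ^ ((i : ℕ) - 1) := by
  rw [map_sum]
  simp [Polynomial.derivative_C_mul_X_pow, Polynomial.derivative_X_pow, Polynomial.eval_finset_sum, mul_assoc]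

lemma aeval_sum_C_mul_X_pow {R A : Type*} [CommRing R] [CommRing A] [Algebra R A] (n : ℕ)
    (b : Fin (n + 1) → R) (x : A) :
    Polynomial.aeval x (∑ i : Fin (n + 1), Polynomial.C (b i) * Polynomial.X ^ (i : ℕ))
      = ∑ i : Fin (n + 1), algebraMap R A (b i) * x ^ (i : ℕ) := by
  simp [map_sum]

/-- let `C ⊆ L` be valued fields of equicharacteristic 0 with `L`
henselian and `L` a regular extension of `C`. Then the residue field `k_L` is a regular
extension of `k_C`: every residue of an integer of `L` that is algebraic over `k_C`
(i.e. is a root of a polynomial over `k_C` with nonzero leading coefficient) is the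
residue of an integer of `C`. -/
theorem residue_field_regular_of_henselian_regular [CharZero K]
    (v : AddValuation K Γ) (hv0 : ∀ n : ℕ, n ≠ 0 → v (n : K) = 0)
    (C L : Subfield K) (hCL : C ≤ L)
    (hhens : ∀ p : Polynomial K, p.Monic → (∀ i, p.coeff i ∈ L ∧ 0 ≤ v (p.coeff i)) →
      ∀ a₀ ∈ L, 0 ≤ v a₀ → 0 < v (p.eval a₀) → v (p.derivative.eval a₀) = 0 →
        ∃ a ∈ L, 0 ≤ v a ∧ p.eval a = 0 ∧ 0 < v (a - a₀))
    (hreg : ∀ x ∈ L, IsAlgebraic C x → x ∈ C) :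
    ∀ x ∈ L, 0 ≤ v x →
      (∃ (n : ℕ) (c : Fin (n + 1) → K), (∀ i, c i ∈ C ∧ 0 ≤ v (c i)) ∧
        v (c (Fin.last n)) = 0 ∧ 0 < v (∑ i, c i * x ^ (i : ℕ))) →
      ∃ c₀ ∈ C, 0 ≤ v c₀ ∧ 0 < v (x - c₀) := by
  intro x hxL hvx hex
  have hpow : ∀ k : ℕ, 0 ≤ v (x ^ k) := by
    intro k
    induction k with
    | zero => rw [pow_zero, v.map_one]
    | succ k ih => rw [pow_succ, v.map_mul]; exact add_nonneg ih hvx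
  have hnat : ∀ k : ℕ, 0 ≤ v ((k : K)) := by
    intro k
    rcases eq_or_ne k 0 with h | h
    · subst h; rw [Nat.cast_zero, v.map_zero]; exact le_top
    · rw [hv0 _ h]
  have key : ∀ n : ℕ, ∀ c : Fin (n + 1) → K, (∀ i, c i ∈ C ∧ 0 ≤ v (c i)) →
      v (c (Fin.last n)) = 0 → 0 < v (∑ i, c i * x ^ (i : ℕ)) →
      ∃ c₀ ∈ C, 0 ≤ v c₀ ∧ 0 < v (x - c₀) := by
    intro n
    induction n using Nat.strong_induction_on with
    | _ n IH =>
      intro c hc hlast hpos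
      cases n with
      | zero =>
        exfalso
        have hsum : (∑ i : Fin 1, c i * x ^ (i : ℕ)) = c 0 := by
          simp
        rw [hsum] at hpos
        have : Fin.last 0 = 0 := rfl
        rw [this] at hlast
        rw [hlast] at hpos
        exact lt_irrefl _ hpos
      | succ m =>
        set cn := c (Fin.last (m + 1)) with hcn_def
        have hcn0 : cn ≠ 0 := by
          intro h
          rw [h, v.map_zero] at hlast
          have hle : v (∑ i, c i * x ^ (i : ℕ)) ≤ 0 := hlast ▸ le_top
          exact lt_irrefl _ (lt_of_le_of_lt hle hpos)
        set a : Fin (m + 2) → K := fun i => c i / cn with ha_def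
        have ha_mem : ∀ i, a i ∈ C := fun i => div_mem (hc i).1 (hc (Fin.last (m + 1))).1
        have hva : ∀ i, v (a i) = v (c i) := by
          intro i
          have h1 : a i * cn = c i := div_mul_cancel₀ _ hcn0
          calc v (a i) = v (a i) + 0 := (add_zero _).symm
            _ = v (a i) + v cn := by rw [hlast]
            _ = v (a i * cn) := (v.map_mul _ _).symm
            _ = v (c i) := by rw [h1]
        have ha_last : a (Fin.last (m + 1)) = 1 := div_self hcn0
        set p : Polynomial K := ∑ i : Fin (m + 2), Polynomial.C (a i) * Polynomial.X ^ (i : ℕ)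
          with hp_def
        have hpmonic : p.Monic := by
          apply Polynomial.monic_of_natDegree_le_of_coeff_eq_one (m + 1)
          · apply Polynomial.natDegree_sum_le_of_forall_le
            intro i _
            refine le_trans (Polynomial.natDegree_C_mul_le _ _) ?_
            rw [Polynomial.natDegree_X_pow]
            exact Fin.is_le i
          · rw [hp_def, coeff_sum_C_mul_X_pow, dif_pos (Nat.lt_succ_self _)]
            exact ha_last
        have hpcoeff : ∀ i, p.coeff i ∈ L ∧ 0 ≤ v (p.coeff i) := by
          intro j
          rw [hp_def, coeff_sum_C_mul_X_pow]
          split_ifs with h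
          · exact ⟨hCL (ha_mem _), by rw [hva]; exact (hc _).2⟩
          · exact ⟨zero_mem _, by rw [v.map_zero]; exact le_top⟩
        have hpeval : 0 < v (p.eval x) := by
          have h1 : p.eval x * cn = ∑ i, c i * x ^ (i : ℕ) := by
            rw [hp_def, eval_sum_C_mul_X_pow, Finset.sum_mul]
            apply Finset.sum_congr rfl
            intro i _
            rw [ha_def]
            rw [mul_right_comm, div_mul_cancel₀ _ hcn0]
          have h2 : v (p.eval x) = v (∑ i, c i * x ^ (i : ℕ)) := by
            calc v (p.eval x) = v (p.eval x) + 0 := (add_zero _).symm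
              _ = v (p.eval x) + v cn := by rw [hlast]
              _ = v (p.eval x * cn) := (v.map_mul _ _).symm
              _ = _ := by rw [h1]
          rw [h2]; exact hpos
        have hDval : (Polynomial.derivative p).eval x
            = ∑ i : Fin (m + 2), a i * (i : ℕ) * x ^ ((i : ℕ) - 1) := by
          rw [hp_def]; exact derivative_eval_sum_C_mul_X_pow _ _ _
        have hDnonneg : 0 ≤ v ((Polynomial.derivative p).eval x) := by
          rw [hDval]
          apply v.map_le_sum
          intro i _
          rw [v.map_mul, v.map_mul]
          exact add_nonneg (add_nonneg (by rw [hva]; exact (hc i).2) (hnat _)) (hpow _)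
        by_cases hD : 0 < v ((Polynomial.derivative p).eval x)
        · -- use induction hypothesis with the derivative's coefficients
          set c' : Fin (m + 1) → K := fun j => a j.succ * (((j : ℕ) + 1 : ℕ) : K) with hc'_def
          have hsum' : (Polynomial.derivative p).eval x
              = (∑ j : Fin (m + 1), c' j * x ^ (j : ℕ)) := by
            rw [hDval, Fin.sum_univ_succ]
            have h0 : a 0 * ((0 : Fin (m + 2)) : ℕ) * x ^ (((0 : Fin (m + 2)) : ℕ) - 1) = 0 := by
              simp
            rw [h0, zero_add]
            apply Finset.sum_congr rfl
            intro j _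
            rw [hc'_def]
            simp [Fin.val_succ, mul_assoc]
          apply IH m (Nat.lt_succ_self m) c'
          · intro j
            constructor
            · exact mul_mem (ha_mem _) (natCast_mem C _)
            · rw [hc'_def]
              simp only
              rw [v.map_mul, hv0 _ (Nat.succ_ne_zero _), add_zero, hva]
              exact (hc _).2
          · rw [hc'_def]
            simp only
            rw [Fin.succ_last, ha_last, one_mul, Fin.val_last]
            exact hv0 _ (Nat.succ_ne_zero m)
          · rw [← hsum']; exact hD
        · -- Hensel's lemma applies
          have hD0 : v ((Polynomial.derivative p).eval x) = 0 :=
            le_antisymm (not_lt.mp hD) hDnonneg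
          obtain ⟨aa, haaL, haav, haa0, haadist⟩ :=
            hhens p hpmonic hpcoeff x hxL hvx hpeval hD0
          have haaC : aa ∈ C := by
            apply hreg aa haaL
            refine ⟨∑ i : Fin (m + 2), Polynomial.C ((⟨a i, ha_mem i⟩ : C))
              * Polynomial.X ^ (i : ℕ), ?_, ?_⟩
            · intro h
              have hco := coeff_sum_C_mul_X_pow (m + 1) (fun i => (⟨a i, ha_mem i⟩ : C)) (m + 1)
              rw [h, Polynomial.coeff_zero, dif_pos (Nat.lt_succ_self _)] at hco
              have : a ⟨m + 1, Nat.lt_succ_self _⟩ = 0 := congrArg Subtype.val hco.symm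
              rw [show (⟨m + 1, Nat.lt_succ_self _⟩ : Fin (m + 2)) = Fin.last (m + 1) from rfl,
                ha_last] at this
              exact one_ne_zero this
            · rw [aeval_sum_C_mul_X_pow]
              have : ∀ i : Fin (m + 2),
                  algebraMap C K (⟨a i, ha_mem i⟩ : C) * aa ^ (i : ℕ) = a i * aa ^ (i : ℕ) := by
                intro i; rfl
              rw [Finset.sum_congr rfl (fun i _ => this i)]
              rw [← eval_sum_C_mul_X_pow (m + 1) a aa, ← hp_def]
              exact haa0
          exact ⟨aa, haaC, haav, by rw [v.map_sub_swap]; exact haadist⟩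
  obtain ⟨n, c, hc, hlast, hpos⟩ := hex
  exact key n c hc hlast hpos

end ResidueFieldDomination
end

section
/- Let C ⊆ L ∩ M be valued fields inside a common valued field with Γ_L ∩ Γ_M = Γ_C, k_L and k_M linearly disjoint over k_C, and L having the good separated basis property over C. Let σ : L → L' be a valued field isomorphism fixing C pointwise and inducing the identity on Γ_L and on k_L. Then σ extends, by the identity on M, to a valued field isomorphism from the compositum LM onto L'M. -/
open scoped BigOperators

namespace ResidueFieldDomination

variable {K : Type*} [Field K] {Γ : Type*} [LinearOrderedAddCommGroupWithTop Γ]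

set_option synthInstance.maxHeartbeats 1000000
set_option maxHeartbeats 1000000

/-- A representation of `x` as `∑ ℓᵢ mᵢ` with `ℓᵢ ∈ L`, `mᵢ ∈ M`. -/
structure MixRep (L M : Subfield K) (x : K) where
  n : ℕ
  l : Fin n → K
  m : Fin n → K
  hl : ∀ i, l i ∈ L
  hm : ∀ i, m i ∈ M
  hx : x = ∑ i, l i * m i

namespace MixRep

variable {L M : Subfield K}

/-- Image of a representation under `σ` applied to the `L`-parts. -/
def image (σ : ↥L →+* K) {x : K} (r : MixRep L M x) : K :=
  ∑ i, σ ⟨r.l i, r.hl i⟩ * r.m i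

def cast {x y : K} (h : x = y) (r : MixRep L M x) : MixRep L M y := h ▸ r

@[simp] lemma image_cast (σ : ↥L →+* K) {x y : K} (h : x = y) (r : MixRep L M x) :
    (r.cast h).image σ = r.image σ := by subst h; rfl

def ofL (y : K) (hy : y ∈ L) : MixRep L M y :=
  ⟨1, fun _ => y, fun _ => 1, fun _ => hy, fun _ => one_mem M, by simp⟩

@[simp] lemma image_ofL (σ : ↥L →+* K) (y : K) (hy : y ∈ L) :
    (ofL (M := M) y hy).image σ = σ ⟨y, hy⟩ := by simp [image, ofL]; exact Fin.sum_univ_one _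

def ofM (y : K) (hy : y ∈ M) : MixRep L M y :=
  ⟨1, fun _ => 1, fun _ => y, fun _ => one_mem L, fun _ => hy, by simp⟩

@[simp] lemma image_ofM (σ : ↥L →+* K) (y : K) (hy : y ∈ M) :
    (ofM (L := L) y hy).image σ = y := by
  simp [image, ofM, show (⟨(1:K), one_mem L⟩ : ↥L) = 1 from rfl]
  show (((Finset.univ : Finset (Fin 1)).card : ℕ) : K) * y = y
  simp

protected def zero : MixRep L M 0 := ⟨0, ![], ![], by simp, by simp, by simp⟩

@[simp] lemma image_zero (σ : ↥L →+* K) : (MixRep.zero (L := L) (M := M)).image σ = 0 := by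
  simp [image, MixRep.zero]
  exact Fin.sum_univ_zero _

protected def add {x y : K} (r : MixRep L M x) (s : MixRep L M y) : MixRep L M (x + y) where
  n := r.n + s.n
  l := Fin.append r.l s.l
  m := Fin.append r.m s.m
  hl := fun i => by
    refine Fin.addCases (fun i => ?_) (fun i => ?_) i <;>
      simp [Fin.append_left, Fin.append_right, r.hl, s.hl]
  hm := fun i => by
    refine Fin.addCases (fun i => ?_) (fun i => ?_) i <;>
      simp [Fin.append_left, Fin.append_right, r.hm, s.hm]
  hx := by
    conv_lhs => rw [r.hx, s.hx]
    rw [Fin.sum_univ_add]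
    simp [Fin.append_left, Fin.append_right]

@[simp] lemma image_add (σ : ↥L →+* K) {x y : K} (r : MixRep L M x) (s : MixRep L M y) :
    (r.add s).image σ = r.image σ + s.image σ := by
  unfold image MixRep.add
  rw [Fin.sum_univ_add]
  simp [Fin.append_left, Fin.append_right]

protected def neg {x : K} (r : MixRep L M x) : MixRep L M (-x) where
  n := r.n
  l := r.l
  m := fun i => -r.m i
  hl := r.hl
  hm := fun i => neg_mem (r.hm i)
  hx := by
    conv_lhs => rw [r.hx]
    simp [mul_neg, Finset.sum_neg_distrib]

@[simp] lemma image_neg (σ : ↥L →+* K) {x : K} (r : MixRep L M x) :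
    (r.neg).image σ = -(r.image σ) := by
  simp [image, MixRep.neg, mul_neg, Finset.sum_neg_distrib]
  rfl

protected def mul {x y : K} (r : MixRep L M x) (s : MixRep L M y) : MixRep L M (x * y) where
  n := r.n * s.n
  l := fun i => r.l (finProdFinEquiv.symm i).1 * s.l (finProdFinEquiv.symm i).2
  m := fun i => r.m (finProdFinEquiv.symm i).1 * s.m (finProdFinEquiv.symm i).2
  hl := fun i => mul_mem (r.hl _) (s.hl _)
  hm := fun i => mul_mem (r.hm _) (s.hm _)
  hx := by
    conv_lhs => rw [r.hx, s.hx]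
    rw [Finset.sum_mul_sum,
      ← Equiv.sum_comp finProdFinEquiv
        (fun i => (r.l (finProdFinEquiv.symm i).1 * s.l (finProdFinEquiv.symm i).2) *
          (r.m (finProdFinEquiv.symm i).1 * s.m (finProdFinEquiv.symm i).2)),
      Fintype.sum_prod_type]
    refine Finset.sum_congr rfl fun i _ => Finset.sum_congr rfl fun j _ => ?_
    simp [mul_mul_mul_comm]

@[simp] lemma image_mul (σ : ↥L →+* K) {x y : K} (r : MixRep L M x) (s : MixRep L M y) :
    (r.mul s).image σ = r.image σ * s.image σ := by
  unfold image MixRep.mul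
  rw [Finset.sum_mul_sum,
    ← Equiv.sum_comp finProdFinEquiv
      (fun i => σ ⟨r.l (finProdFinEquiv.symm i).1 * s.l (finProdFinEquiv.symm i).2,
          mul_mem (r.hl _) (s.hl _)⟩ *
        (r.m (finProdFinEquiv.symm i).1 * s.m (finProdFinEquiv.symm i).2)),
    Fintype.sum_prod_type]
  refine Finset.sum_congr rfl fun i _ => Finset.sum_congr rfl fun j _ => ?_
  have : (⟨r.l i * s.l j, mul_mem (r.hl i) (s.hl j)⟩ : ↥L)
      = ⟨r.l i, r.hl i⟩ * ⟨s.l j, s.hl j⟩ := rfl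
  simp only [Equiv.symm_apply_apply, this, map_mul]
  ring

/-- Any element with a mixed representation lies in the subfield closure of `L ∪ M`. -/
lemma mem_closure {x : K} (r : MixRep L M x) :
    x ∈ Subfield.closure ((L : Set K) ∪ (M : Set K)) := by
  rw [r.hx]
  refine sum_mem fun i _ => mul_mem ?_ ?_
  · exact Subfield.subset_closure (Set.mem_union_left _ (r.hl i))
  · exact Subfield.subset_closure (Set.mem_union_right _ (r.hm i))

end MixRep

/-- Elements representable as mixed sums form a subring. -/
lemma nonempty_mixRep_of_mem_subring_closure {L M : Subfield K} {x : K}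
    (hx : x ∈ Subring.closure ((L : Set K) ∪ (M : Set K))) : Nonempty (MixRep L M x) := by
  let S : Subring K :=
    { carrier := {x | Nonempty (MixRep L M x)}
      zero_mem' := ⟨MixRep.zero⟩
      one_mem' := ⟨MixRep.ofL 1 (one_mem L)⟩
      add_mem' := fun ⟨r⟩ ⟨s⟩ => ⟨r.add s⟩
      neg_mem' := fun ⟨r⟩ => ⟨r.neg⟩
      mul_mem' := fun ⟨r⟩ ⟨s⟩ => ⟨r.mul s⟩ }
  have : Subring.closure ((L : Set K) ∪ (M : Set K)) ≤ S := by
    rw [Subring.closure_le]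
    rintro y (hy | hy)
    · exact ⟨MixRep.ofL y hy⟩
    · exact ⟨MixRep.ofM y hy⟩
  exact this hx




-- helpers
section Helpers
variable (v : AddValuation K Γ)

lemma vne_top {x : K} (hx : x ≠ 0) : v x ≠ ⊤ := (AddValuation.ne_top_iff v).2 hx

lemma vsub_self {a : Γ} (h : a ≠ ⊤) : a - a = 0 := by
  rw [sub_eq_add_neg]
  exact LinearOrderedAddCommGroupWithTop.add_neg_cancel_of_ne_top h

lemma veq_of_sub_eq_zero {a b : Γ} (h : a - b = 0) (hb : b ≠ ⊤) : a = b := by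
  rw [sub_eq_add_neg] at h
  have h1 : -(-b) = a := neg_eq_of_add_eq_zero_left h
  rw [neg_neg] at h1
  exact h1.symm

lemma zero_lt_top_Γ : (0 : Γ) < ⊤ :=
  lt_top_iff_ne_top.2 fun h => LinearOrderedAddCommGroupWithTop.top_ne_zero h.symm

lemma sum_equivFin {k : ℕ} (S : Finset (Fin k)) (g : Fin k → K) :
    ∑ t : Fin S.card, g ↑(S.equivFin.symm t) = ∑ j ∈ S, g j := by
  rw [← Finset.sum_coe_sort S g]
  exact Equiv.sum_comp S.equivFin.symm fun x => g ↑x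

end Helpers

section MainLemma

variable (v : AddValuation K Γ) {C L L' M : Subfield K}

/-- Main analytic lemma: a good separated (over `C`) tuple from `L` stays separated
over `M`, and so does any tuple with the same values and same residue-normalizations. -/
lemma sep_over_M
    (hΓ : valGroup v L ∩ valGroup v M = valGroup v C)
    (hres : ResLinDisjoint v C L M)
    {k : ℕ} (e f : Fin k → K)
    (heL : ∀ j, e j ∈ L) (he0 : ∀ j, e j ≠ 0)
    (hsep : SepOver v C e) (hgood : GoodOver v C e)
    (hvf : ∀ j, v (f j) = v (e j))
    (hrf : ∀ i j, v (e i) = v (e j) → 0 < v (f i / f j - e i / e j))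
    (c : Fin k → K) (hc : ∀ j, c j ∈ M) :
    v (∑ j, c j * f j) = Finset.univ.inf fun j => v (c j * f j) := by
  classical
  set γ := Finset.univ.inf fun j => v (c j * f j) with hγdef
  have hγle : ∀ j, γ ≤ v (c j * f j) := fun j => by
    rw [hγdef]; exact Finset.inf_le (Finset.mem_univ j)
  by_cases hγtop : γ = ⊤
  · have h0 : ∀ j, c j * f j = 0 := fun j =>
      (AddValuation.top_iff v).1 (top_le_iff.1 (hγtop ▸ hγle j))
    rw [Finset.sum_eq_zero fun j _ => h0 j, hγtop, AddValuation.map_zero]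
  have hγlt : γ < ⊤ := lt_of_le_of_ne le_top hγtop
  have hne : (Finset.univ : Finset (Fin k)).Nonempty := by
    rcases (Finset.univ : Finset (Fin k)).eq_empty_or_nonempty with h | h
    · exact absurd (show γ = ⊤ by rw [hγdef, h]; exact Finset.inf_empty) hγtop
    · exact h
  obtain ⟨i₀, -, hi₀⟩ := Finset.exists_mem_eq_inf Finset.univ hne fun j => v (c j * f j)
  rw [← hγdef] at hi₀
  have hf0 : ∀ j, f j ≠ 0 := fun j h => he0 j ((AddValuation.top_iff v).1 (by
    rw [← hvf j, h, AddValuation.map_zero]))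
  have hcf0 : ∀ j, v (c j * f j) = γ → c j ≠ 0 := by
    intro j hj h
    rw [h, zero_mul, AddValuation.map_zero] at hj
    exact hγtop hj.symm
  have hc0 : c i₀ ≠ 0 := hcf0 i₀ hi₀.symm
  have key : ∀ j, v (c j * f j) = γ → v (e j) = v (e i₀) ∧ v (c j) = v (c i₀) := by
    intro j hj
    have hcj : c j ≠ 0 := hcf0 j hj
    have h1 : v ((c i₀ * f i₀) / (c j * f j)) = 0 := by
      rw [AddValuation.map_div, ← hi₀, hj]
      exact vsub_self hγtop
    have h2 : (c i₀ * f i₀) / (c j * f j) = (c i₀ / c j) * (f i₀ / f j) :=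
      (div_mul_div_comm _ _ _ _).symm
    have h3 : v (c i₀ / c j) + v (f i₀ / f j) = 0 := by
      rw [← AddValuation.map_mul, ← h2, h1]
    have h4 : v (f j / f i₀) + v (f i₀ / f j) = 0 := by
      rw [← AddValuation.map_mul,
        show f j / f i₀ * (f i₀ / f j) = 1 by
          rw [div_mul_div_comm, mul_comm (f i₀) (f j),
            div_self (mul_ne_zero (hf0 j) (hf0 i₀))],
        AddValuation.map_one]
    have h5 : v (c i₀ / c j) = v (f j / f i₀) :=
      (neg_eq_of_add_eq_zero_left h3).symm.trans (neg_eq_of_add_eq_zero_left h4)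
    have h6 : v (f j / f i₀) = v (e j / e i₀) := by
      rw [AddValuation.map_div, AddValuation.map_div, hvf j, hvf i₀]
    have hee : v (e j) = v (e i₀) := by
      rcases hgood j i₀ with h | h
      · exact h
      · exfalso
        apply h
        rw [← hΓ]
        constructor
        · exact ⟨e j / e i₀, div_mem (heL j) (heL i₀), div_ne_zero (he0 j) (he0 i₀),
            AddValuation.map_div v⟩
        · exact ⟨c i₀ / c j, div_mem (hc i₀) (hc j), div_ne_zero hc0 hcj,
            by rw [h5, h6, AddValuation.map_div]⟩
    refine ⟨hee, ?_⟩
    have h7 : v (c i₀ / c j) = 0 := by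
      rw [h5, h6, AddValuation.map_div, hee]
      exact vsub_self (vne_top v (he0 i₀))
    rw [AddValuation.map_div] at h7
    exact (veq_of_sub_eq_zero h7 (vne_top v hcj)).symm
  set S : Finset (Fin k) := Finset.univ.filter (fun j => v (c j * f j) = γ) with hSdef
  have hi₀S : i₀ ∈ S := Finset.mem_filter.2 ⟨Finset.mem_univ _, hi₀.symm⟩
  set q : Fin S.card → Fin k := fun t => ↑(S.equivFin.symm t) with hqdef
  have hqS : ∀ t, q t ∈ S := fun t => (S.equivFin.symm t).2
  have hqγ : ∀ t, v (c (q t) * f (q t)) = γ := fun t => (Finset.mem_filter.1 (hqS t)).2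
  set u : Fin S.card → K := fun t => e (q t) / e i₀ with hudef
  have huL : ∀ t, u t ∈ L := fun t => div_mem (heL _) (heL i₀)
  have huv : ∀ t, v (u t) = 0 := fun t => by
    simp only [hudef]
    rw [AddValuation.map_div, (key _ (hqγ t)).1]
    exact vsub_self (vne_top v (he0 i₀))
  have hsum : ∀ g : Fin k → K, ∑ t, g (q t) = ∑ j ∈ S, g j := fun g => sum_equivFin S g
  have hindC : ResIndepOver v C u := by
    intro b hb hpos t
    set b' : Fin k → K := fun j => if h : j ∈ S then b (S.equivFin ⟨j, h⟩) else 0 with hb'def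
    have hb'C : ∀ j, b' j ∈ C := by
      intro j; simp only [hb'def]; split
      · exact (hb _).1
      · exact zero_mem C
    have hb'q : ∀ t, b' (q t) = b t := by
      intro t
      simp only [hb'def]
      rw [dif_pos (hqS t)]
      congr 1
      have : (⟨q t, hqS t⟩ : {x // x ∈ S}) = S.equivFin.symm t := Subtype.coe_eta _ _
      rw [this, Equiv.apply_symm_apply]
    have hsum1 : ∑ j, b' j * e j = ∑ t, b t * e (q t) := by
      rw [← Finset.sum_subset (Finset.subset_univ S) (fun x _ hx => by
        simp only [hb'def]; rw [dif_neg hx, zero_mul])]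
      rw [← hsum (fun j => b' j * e j)]
      exact Finset.sum_congr rfl fun t _ => by rw [hb'q t]
    have hsum2 : ∑ t', b t' * u t' = (∑ j, b' j * e j) * (e i₀)⁻¹ := by
      rw [hsum1, Finset.sum_mul]
      exact Finset.sum_congr rfl fun t' _ => by
        simp only [hudef]; rw [div_eq_mul_inv, mul_assoc]
    have hv1 : v (∑ j, b' j * e j) ≤ v (b t) + v (e i₀) := by
      rw [hsep b' hb'C]
      refine le_trans (Finset.inf_le (Finset.mem_univ (q t))) ?_
      rw [hb'q t, AddValuation.map_mul, (key _ (hqγ t)).1]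
    have hv2 : v (∑ t', b t' * u t') ≤ v (b t) := by
      rw [hsum2, AddValuation.map_mul, AddValuation.map_inv]
      calc v (∑ j, b' j * e j) + -(v (e i₀))
          ≤ (v (b t) + v (e i₀)) + -(v (e i₀)) := add_le_add_left hv1 _
        _ = v (b t) := by
            rw [add_assoc,
              LinearOrderedAddCommGroupWithTop.add_neg_cancel_of_ne_top (vne_top v (he0 i₀)),
              add_zero]
    exact lt_of_lt_of_le hpos hv2
  have hindM : ResIndepOver v M u :=
    hres S.card u (fun t => ⟨huL t, le_of_eq (huv t).symm⟩) hindC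
  have hAle : γ ≤ v (∑ j ∈ S, c j * f j) :=
    AddValuation.map_le_sum v fun j hj => le_of_eq (Finset.mem_filter.1 hj).2.symm
  have hAeq : v (∑ j ∈ S, c j * f j) = γ := by
    by_contra hneq
    have hAlt : γ < v (∑ j ∈ S, c j * f j) := lt_of_le_of_ne hAle fun h => hneq h.symm
    set d : Fin S.card → K := fun t => c (q t) / c i₀ with hddef
    set w : Fin S.card → K := fun t => f (q t) / f i₀ with hwdef
    have hd0 : ∀ t, v (d t) = 0 := fun t => by
      simp only [hddef]
      rw [AddValuation.map_div, (key _ (hqγ t)).2]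
      exact vsub_self (vne_top v hc0)
    have hAfact : ∑ j ∈ S, c j * f j = (c i₀ * f i₀) * ∑ t, d t * w t := by
      rw [Finset.mul_sum, ← hsum (fun j => c j * f j)]
      refine Finset.sum_congr rfl fun t _ => ?_
      simp only [hddef, hwdef]
      field_simp [hc0, hf0 i₀]
    have hBpos : 0 < v (∑ t, d t * w t) := by
      by_contra hB
      push_neg at hB
      have h' : v (c i₀ * f i₀) + v (∑ t, d t * w t) ≤ v (c i₀ * f i₀) + 0 :=
        add_le_add_right hB _
      rw [add_zero] at h'
      have : v (∑ j ∈ S, c j * f j) ≤ γ := by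
        rw [hAfact, AddValuation.map_mul]
        exact h'.trans (le_of_eq hi₀.symm)
      exact absurd this (not_le.2 hAlt)
    have hWU : 0 < v (∑ t, d t * (w t - u t)) := by
      refine AddValuation.map_lt_sum' v zero_lt_top_Γ fun t _ => ?_
      rw [AddValuation.map_mul, hd0 t, zero_add]
      simp only [hwdef, hudef]
      exact hrf (q t) i₀ (key _ (hqγ t)).1
    have hDU : 0 < v (∑ t, d t * u t) := by
      have hrw : ∑ t, d t * u t = (∑ t, d t * w t) - ∑ t, d t * (w t - u t) := by
        rw [← Finset.sum_sub_distrib]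
        exact Finset.sum_congr rfl fun t _ => by ring
      rw [hrw]
      exact lt_of_lt_of_le (lt_min hBpos hWU) (AddValuation.map_sub v _ _)
    have hcontra := hindM d (fun t => ⟨div_mem (hc _) (hc i₀), le_of_eq (hd0 t).symm⟩) hDU
      (S.equivFin ⟨i₀, hi₀S⟩)
    simp only [hddef] at hcontra
    rw [show q (S.equivFin ⟨i₀, hi₀S⟩) = i₀ by
        simp only [hqdef]; rw [Equiv.symm_apply_apply],
      div_self hc0, AddValuation.map_one] at hcontra
    exact lt_irrefl _ hcontra
  have hRlt : γ < v (∑ j ∈ Finset.univ.filter (fun j => ¬ v (c j * f j) = γ), c j * f j) := by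
    refine AddValuation.map_lt_sum' v hγlt fun j hj => ?_
    exact lt_of_le_of_ne (hγle j) fun h => (Finset.mem_filter.1 hj).2 h.symm
  calc v (∑ j, c j * f j)
      = v ((∑ j ∈ S, c j * f j) +
          ∑ j ∈ Finset.univ.filter (fun j => ¬ v (c j * f j) = γ), c j * f j) := by
        rw [hSdef, Finset.sum_filter_add_sum_filter_not]
    _ = γ := by
        rw [AddValuation.map_add_eq_of_lt_left v (by rw [hAeq]; exact hRlt), hAeq]

end MainLemma

section Transfer

variable (v : AddValuation K Γ) {C L M : Subfield K} (σ : ↥L →+* K)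

/-- Bundle of the standing hypotheses. -/
structure Hyp (v : AddValuation K Γ) (C L M : Subfield K) (σ : ↥L →+* K) : Prop where
  hCL : C ≤ L
  hCM : C ≤ M
  hΓ : valGroup v L ∩ valGroup v M = valGroup v C
  hres : ResLinDisjoint v C L M
  hgsb : GoodSepBasisProp v C L
  hσC : ∀ x : ↥L, (x : K) ∈ C → σ x = x
  hσΓ : ∀ x : ↥L, v (σ x) = v (x : K)
  hσk : ∀ x : ↥L, 0 ≤ v (x : K) → 0 < v (σ x - (x : K))

lemma image_val (H : Hyp v C L M σ) {x : K} (r : MixRep L M x) :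
    v (r.image σ) = v x := by
  classical
  obtain ⟨k, e, hek, hspan, hsep, hgood⟩ := H.hgsb r.n r.l r.hl
  have heL : ∀ j, e j ∈ L := fun j => (hek j).1
  have he0 : ∀ j, e j ≠ 0 := fun j => (hek j).2
  have hmem : ∀ i, ∃ cf : Fin k → K, (∀ j, cf j ∈ C) ∧ r.l i = ∑ j, cf j * e j := by
    intro i
    have h1 : r.l i ∈ spanIn C r.l := by
      refine ⟨fun j => if j = i then 1 else 0,
        fun j => by by_cases h : j = i <;> simp [h, one_mem, zero_mem], ?_⟩
      have h2 : ∑ j, (if j = i then (1:K) else 0) * r.l j = r.l i := by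
        simp [ite_mul]
      exact h2.symm
    rw [← hspan] at h1
    exact h1
  choose cf hcfC hcfe using hmem
  set mm : Fin k → K := fun j => ∑ i, cf i j * r.m i with hmmdef
  have hmmM : ∀ j, mm j ∈ M := fun j => sum_mem fun i _ => mul_mem (H.hCM (hcfC i j)) (r.hm i)
  have hx1 : x = ∑ j, mm j * e j := by
    rw [r.hx]
    calc ∑ i, r.l i * r.m i = ∑ i, ∑ j, cf i j * r.m i * e j := by
          refine Finset.sum_congr rfl fun i _ => ?_
          rw [hcfe i, Finset.sum_mul]
          exact Finset.sum_congr rfl fun j _ => by ring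
      _ = ∑ j, ∑ i, cf i j * r.m i * e j := Finset.sum_comm
      _ = ∑ j, mm j * e j := by
          refine Finset.sum_congr rfl fun j _ => ?_
          simp only [hmmdef]
          rw [Finset.sum_mul]
  have himg : r.image σ = ∑ j, mm j * σ ⟨e j, heL j⟩ := by
    have hσl : ∀ i, σ ⟨r.l i, r.hl i⟩ = ∑ j, cf i j * σ ⟨e j, heL j⟩ := by
      intro i
      have hsub : (⟨r.l i, r.hl i⟩ : ↥L)
          = ∑ j, (⟨cf i j, H.hCL (hcfC i j)⟩ : ↥L) * ⟨e j, heL j⟩ := by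
        apply Subtype.ext
        push_cast
        exact hcfe i
      rw [hsub, map_sum]
      refine Finset.sum_congr rfl fun j _ => ?_
      rw [map_mul, H.hσC _ (hcfC i j)]
    calc r.image σ = ∑ i, σ ⟨r.l i, r.hl i⟩ * r.m i := rfl
      _ = ∑ i, ∑ j, cf i j * r.m i * σ ⟨e j, heL j⟩ := by
          refine Finset.sum_congr rfl fun i _ => ?_
          rw [hσl i, Finset.sum_mul]
          exact Finset.sum_congr rfl fun j _ => by ring
      _ = ∑ j, ∑ i, cf i j * r.m i * σ ⟨e j, heL j⟩ := Finset.sum_comm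
      _ = ∑ j, mm j * σ ⟨e j, heL j⟩ := by
          refine Finset.sum_congr rfl fun j _ => ?_
          simp only [hmmdef]
          rw [Finset.sum_mul]
  have h1 : v (∑ j, mm j * e j) = Finset.univ.inf fun j => v (mm j * e j) :=
    sep_over_M v H.hΓ H.hres e e heL he0 hsep hgood (fun _ => rfl)
      (fun i j _ => by rw [sub_self, AddValuation.map_zero]; exact zero_lt_top_Γ) mm hmmM
  have h2 : v (∑ j, mm j * σ ⟨e j, heL j⟩)
      = Finset.univ.inf fun j => v (mm j * σ ⟨e j, heL j⟩) := by
    refine sep_over_M v H.hΓ H.hres e (fun j => σ ⟨e j, heL j⟩) heL he0 hsep hgood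
      (fun j => H.hσΓ _) (fun i j hij => ?_) mm hmmM
    have hval : ((⟨e i, heL i⟩ / ⟨e j, heL j⟩ : ↥L) : K) = e i / e j := by push_cast; rfl
    have h0 : 0 ≤ v ((⟨e i, heL i⟩ / ⟨e j, heL j⟩ : ↥L) : K) := by
      rw [hval, AddValuation.map_div, hij]
      exact le_of_eq (vsub_self (vne_top v (he0 j))).symm
    have hk := H.hσk _ h0
    rwa [map_div₀, hval] at hk
  rw [himg, hx1, h1, h2]
  refine Finset.inf_congr rfl fun j _ => ?_
  rw [AddValuation.map_mul, AddValuation.map_mul, H.hσΓ]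

lemma image_welldef (H : Hyp v C L M σ) {x : K} (r r' : MixRep L M x) :
    r.image σ = r'.image σ := by
  have hv := image_val v σ H ((r.add r'.neg).cast (add_neg_cancel x))
  rw [AddValuation.map_zero] at hv
  have h0 := (AddValuation.top_iff v).1 hv
  rw [MixRep.image_cast, MixRep.image_add, MixRep.image_neg] at h0
  exact add_neg_eq_zero.1 h0

open Classical in
/-- The candidate extension on representable elements. -/
noncomputable def Phi (σ : ↥L →+* K) (M : Subfield K) (x : K) : K :=
  if h : Nonempty (MixRep L M x) then h.some.image σ else 0

lemma Phi_eq (H : Hyp v C L M σ) {x : K} (r : MixRep L M x) :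
    Phi σ M x = r.image σ := by
  rw [Phi]
  rw [dif_pos (⟨r⟩ : Nonempty (MixRep L M x))]
  exact image_welldef v σ H _ r

lemma Phi_v (H : Hyp v C L M σ) {x : K} (h : Nonempty (MixRep L M x)) :
    v (Phi σ M x) = v x := by
  rw [Phi_eq v σ H h.some]
  exact image_val v σ H h.some

lemma Phi_ne (H : Hyp v C L M σ) {x : K} (h : Nonempty (MixRep L M x)) (hx : x ≠ 0) :
    Phi σ M x ≠ 0 :=
  (AddValuation.ne_top_iff v).1 (by rw [Phi_v v σ H h]; exact vne_top v hx)

lemma Phi_add (H : Hyp v C L M σ) {x y : K} (hx : Nonempty (MixRep L M x))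
    (hy : Nonempty (MixRep L M y)) : Phi σ M (x + y) = Phi σ M x + Phi σ M y := by
  rw [Phi_eq v σ H (hx.some.add hy.some), MixRep.image_add,
    ← Phi_eq v σ H hx.some, ← Phi_eq v σ H hy.some]

lemma Phi_mul (H : Hyp v C L M σ) {x y : K} (hx : Nonempty (MixRep L M x))
    (hy : Nonempty (MixRep L M y)) : Phi σ M (x * y) = Phi σ M x * Phi σ M y := by
  rw [Phi_eq v σ H (hx.some.mul hy.some), MixRep.image_mul,
    ← Phi_eq v σ H hx.some, ← Phi_eq v σ H hy.some]

lemma Phi_zero (H : Hyp v C L M σ) : Phi σ M 0 = 0 := by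
  rw [Phi_eq v σ H MixRep.zero, MixRep.image_zero]

lemma Phi_one (H : Hyp v C L M σ) : Phi σ M 1 = 1 := by
  rw [Phi_eq v σ H (MixRep.ofL 1 (one_mem L)), MixRep.image_ofL,
    show (⟨(1:K), one_mem L⟩ : ↥L) = 1 from rfl, map_one]

lemma Phi_M (H : Hyp v C L M σ) {x : K} (hx : x ∈ M) : Phi σ M x = x := by
  rw [Phi_eq v σ H (MixRep.ofM x hx), MixRep.image_ofM]

lemma Phi_L (H : Hyp v C L M σ) (y : ↥L) : Phi σ M (y : K) = σ y := by
  rw [Phi_eq v σ H (MixRep.ofL (y : K) y.2), MixRep.image_ofL]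

end Transfer


/-- extension of a valued field isomorphism `σ : L → L'` fixing `C`
pointwise and inducing the identity on `Γ_L` and on `k_L`, by the identity on `M`, to a
valued field isomorphism of the compositum `LM` onto `L'M`. -/
theorem isomorphism_extension
    (v : AddValuation K Γ) (C L L' M : Subfield K)
    (hCL : C ≤ L) (hCL' : C ≤ L') (hCM : C ≤ M)
    (hΓ : valGroup v L ∩ valGroup v M = valGroup v C)
    (hres : ResLinDisjoint v C L M)
    (hgsb : GoodSepBasisProp v C L)
    (σ : ↥L →+* K)
    (hσL' : ∀ x : ↥L, σ x ∈ L')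
    (hσsurj : ∀ y ∈ L', ∃ x : ↥L, σ x = y)
    (hσC : ∀ x : ↥L, (x : K) ∈ C → σ x = x)
    (hσΓ : ∀ x : ↥L, v (σ x) = v (x : K))
    (hσk : ∀ x : ↥L, 0 ≤ v (x : K) → 0 < v (σ x - (x : K))) :
    ∃ τ : ↥(Subfield.closure ((L : Set K) ∪ (M : Set K))) →+* K,
      (∀ x, v (τ x) = v (x : K)) ∧
      (∀ x : ↥(Subfield.closure ((L : Set K) ∪ (M : Set K))), (x : K) ∈ M → τ x = x) ∧
      (∀ y : ↥L, τ ⟨(y : K), Subfield.subset_closure (Set.mem_union_left _ y.2)⟩ = σ y) ∧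
      Set.range τ = ↑(Subfield.closure ((L' : Set K) ∪ (M : Set K))) := by
  classical
  have H : Hyp v C L M σ := ⟨hCL, hCM, hΓ, hres, hgsb, hσC, hσΓ, hσk⟩
  set F := Subfield.closure ((L : Set K) ∪ (M : Set K)) with hFdef
  have hrep : ∀ x : ↥F, ∃ pq : K × K,
      Nonempty (MixRep L M pq.1) ∧ Nonempty (MixRep L M pq.2) ∧ pq.2 ≠ 0 ∧
        (x : K) = pq.1 / pq.2 := by
    rintro ⟨x, hx⟩
    rw [hFdef, Subfield.mem_closure_iff] at hx
    obtain ⟨y, hy, z, hz, hyz⟩ := hx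
    by_cases hz0 : z = 0
    · refine ⟨(0, 1), ⟨MixRep.zero⟩, ⟨MixRep.ofL 1 (one_mem L)⟩, one_ne_zero, ?_⟩
      show x = 0 / 1
      rw [zero_div, ← hyz, hz0, div_zero]
    · exact ⟨(y, z), nonempty_mixRep_of_mem_subring_closure hy,
        nonempty_mixRep_of_mem_subring_closure hz, hz0, hyz.symm⟩
  choose rp h1 h2 h3 h4 using hrep
  let τf : ↥F → K := fun x => Phi σ M (rp x).1 / Phi σ M (rp x).2
  have τ_spec : ∀ (x : ↥F) (p q : K), Nonempty (MixRep L M p) → Nonempty (MixRep L M q) →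
      q ≠ 0 → (x : K) = p / q → τf x = Phi σ M p / Phi σ M q := by
    intro x p q hp hq hq0 hx
    have hcross : (rp x).1 * q = p * (rp x).2 := by
      have hdd : (rp x).1 / (rp x).2 = p / q := (h4 x).symm.trans hx
      rw [div_eq_div_iff (h3 x) hq0] at hdd
      exact hdd
    have e1 : Phi σ M ((rp x).1) * Phi σ M q = Phi σ M p * Phi σ M ((rp x).2) := by
      rw [← Phi_mul v σ H (h1 x) hq, ← Phi_mul v σ H hp (h2 x), hcross]
    show Phi σ M (rp x).1 / Phi σ M (rp x).2 = Phi σ M p / Phi σ M q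
    rw [div_eq_div_iff (Phi_ne v σ H (h2 x) (h3 x)) (Phi_ne v σ H hq hq0)]
    exact e1
  have hone : τf 1 = 1 := by
    rw [τ_spec 1 1 1 ⟨MixRep.ofL 1 (one_mem L)⟩ ⟨MixRep.ofL 1 (one_mem L)⟩ one_ne_zero
      (by simp), Phi_one v σ H, div_one]
  have hzero : τf 0 = 0 := by
    rw [τ_spec 0 0 1 ⟨MixRep.zero⟩ ⟨MixRep.ofL 1 (one_mem L)⟩ one_ne_zero (by simp),
      Phi_zero v σ H, zero_div]
  have hmul : ∀ x y : ↥F, τf (x * y) = τf x * τf y := by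
    intro x y
    have hxy : ((x * y : ↥F) : K) = ((rp x).1 * (rp y).1) / ((rp x).2 * (rp y).2) := by
      push_cast
      rw [h4 x, h4 y, div_mul_div_comm]
    rw [τ_spec (x * y) _ _ ⟨(h1 x).some.mul (h1 y).some⟩ ⟨(h2 x).some.mul (h2 y).some⟩
        (mul_ne_zero (h3 x) (h3 y)) hxy,
      Phi_mul v σ H (h1 x) (h1 y), Phi_mul v σ H (h2 x) (h2 y), div_mul_div_comm]
  have hadd : ∀ x y : ↥F, τf (x + y) = τf x + τf y := by
    intro x y
    have hxy : ((x + y : ↥F) : K)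
        = ((rp x).1 * (rp y).2 + (rp x).2 * (rp y).1) / ((rp x).2 * (rp y).2) := by
      push_cast
      rw [h4 x, h4 y, div_add_div _ _ (h3 x) (h3 y)]
    rw [τ_spec (x + y) _ _ ⟨((h1 x).some.mul (h2 y).some).add ((h2 x).some.mul (h1 y).some)⟩
        ⟨(h2 x).some.mul (h2 y).some⟩ (mul_ne_zero (h3 x) (h3 y)) hxy,
      Phi_add v σ H ⟨(h1 x).some.mul (h2 y).some⟩ ⟨(h2 x).some.mul (h1 y).some⟩,
      Phi_mul v σ H (h1 x) (h2 y), Phi_mul v σ H (h2 x) (h1 y),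
      Phi_mul v σ H (h2 x) (h2 y),
      div_add_div _ _ (Phi_ne v σ H (h2 x) (h3 x)) (Phi_ne v σ H (h2 y) (h3 y))]
  refine ⟨{ toFun := τf, map_one' := hone, map_mul' := hmul,
            map_zero' := hzero, map_add' := hadd }, ?_, ?_, ?_, ?_⟩
  · intro x
    show v (τf x) = v (x : K)
    show v (Phi σ M (rp x).1 / Phi σ M (rp x).2) = v (x : K)
    rw [AddValuation.map_div, Phi_v v σ H (h1 x), Phi_v v σ H (h2 x),
      ← AddValuation.map_div, ← h4 x]
  · intro x hx
    show τf x = (x : K)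
    rw [τ_spec x (x : K) 1 ⟨MixRep.ofM _ hx⟩ ⟨MixRep.ofL 1 (one_mem L)⟩ one_ne_zero
      (div_one _).symm, Phi_M v σ H hx, Phi_one v σ H, div_one]
  · intro y
    show τf _ = σ y
    rw [τ_spec _ (y : K) 1 ⟨MixRep.ofL _ y.2⟩ ⟨MixRep.ofL 1 (one_mem L)⟩ one_ne_zero
      (div_one _).symm, Phi_L v σ H y, Phi_one v σ H, div_one]
  · have PhiMem : ∀ {x : K}, Nonempty (MixRep L M x) →
        Phi σ M x ∈ Subfield.closure ((L' : Set K) ∪ (M : Set K)) := by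
      rintro x ⟨r⟩
      rw [Phi_eq v σ H r]
      refine sum_mem fun i _ => mul_mem ?_ ?_
      · exact Subfield.subset_closure (Set.mem_union_left _ (hσL' _))
      · exact Subfield.subset_closure (Set.mem_union_right _ (r.hm i))
    have PhiSurj : ∀ w : K, Nonempty (MixRep L' M w) →
        ∃ x : K, Nonempty (MixRep L M x) ∧ Phi σ M x = w := by
      rintro w ⟨r⟩
      choose xs hxs using fun (i : Fin r.n) => hσsurj (r.l i) (r.hl i)
      refine ⟨∑ i, (xs i : K) * r.m i,
        ⟨⟨r.n, fun i => (xs i : K), r.m, fun i => (xs i).2, r.hm, rfl⟩⟩, ?_⟩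
      rw [Phi_eq v σ H (⟨r.n, fun i => (xs i : K), r.m, fun i => (xs i).2, r.hm, rfl⟩ :
        MixRep L M (∑ i, (xs i : K) * r.m i))]
      conv_rhs => rw [r.hx]
      refine Finset.sum_congr rfl fun i _ => ?_
      congr 1
      rw [show (⟨((xs i : ↥L) : K), (xs i).2⟩ : ↥L) = xs i from Subtype.coe_eta _ _]
      exact hxs i
    ext w
    constructor
    · rintro ⟨x, rfl⟩
      show τf x ∈ _
      exact div_mem (PhiMem (h1 x)) (PhiMem (h2 x))
    · intro hw
      rw [SetLike.mem_coe, Subfield.mem_closure_iff] at hw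
      obtain ⟨p', hp', q', hq', hw⟩ := hw
      by_cases hq'0 : q' = 0
      · refine ⟨0, ?_⟩
        show τf 0 = w
        rw [hzero, ← hw, hq'0, div_zero]
      · obtain ⟨p, hpmem, hPp⟩ := PhiSurj p' (nonempty_mixRep_of_mem_subring_closure hp')
        obtain ⟨q, hqmem, hPq⟩ := PhiSurj q' (nonempty_mixRep_of_mem_subring_closure hq')
        have hqne : q ≠ 0 := by
          intro h
          apply hq'0
          rw [← hPq, h, Phi_zero v σ H]
        have hmemF : p / q ∈ F := by
          rw [hFdef]
          exact div_mem (MixRep.mem_closure hpmem.some) (MixRep.mem_closure hqmem.some)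
        refine ⟨⟨p / q, hmemF⟩, ?_⟩
        show τf _ = w
        rw [τ_spec _ p q hpmem hqmem hqne rfl, hPp, hPq, hw]

end ResidueFieldDomination
end

section
/- Let C ⊆ M be valued fields with v(∑_{i=1}^k ℓ_i m_i) > min{v(ℓ_i m_i)} for some m_i ∈ M, where ℓ_1,...,ℓ_k is a good separated basis over C and k_L, k_M are linearly disjoint over k_C and Γ_L ∩ Γ_M = Γ_C. Then, letting I be the set of indices achieving the minimum γ and fixing j ∈ I, one has 1 + ∑_{i ∈ I, i≠j} res(ℓ_i/ℓ_j) res(m_i/m_j) = 0 in the residue field. -/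
open scoped BigOperators

namespace ResidueFieldDomination

variable {K : Type*} [Field K] {Γ : Type*} [LinearOrderedAddCommGroupWithTop Γ]

/-- if `v(∑ ℓᵢ mᵢ) > min v(ℓᵢ mᵢ) = γ` with `ℓ` a good separated basis over
`C`, residue fields linearly disjoint and `Γ_L ∩ Γ_M = Γ_C`, then for `I` the set of
indices achieving the minimum and `j ∈ I`,
`1 + ∑_{i ∈ I, i ≠ j} res(ℓᵢ/ℓⱼ) res(mᵢ/mⱼ) = 0` in the residue field — equivalently,
`v(1 + ∑_{i ∈ I, i ≠ j} (ℓᵢ/ℓⱼ)(mᵢ/mⱼ)) > 0`. -/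
theorem residue_relation_of_nonseparated_sum
    (v : AddValuation K Γ) (C L M : Subfield K) (hCL : C ≤ L) (hCM : C ≤ M)
    (hΓ : valGroup v L ∩ valGroup v M = valGroup v C)
    (hres : ResLinDisjoint v C L M)
    {k : ℕ} (ℓ m : Fin k → K)
    (hℓ : ∀ i, ℓ i ∈ L ∧ ℓ i ≠ 0) (hm : ∀ i, m i ∈ M)
    (hsep : SepOver v C ℓ) (hgood : GoodOver v C ℓ)
    (γ : Γ) (hγ : γ = Finset.univ.inf fun i => v (ℓ i * m i))
    (hgt : γ < v (∑ i, ℓ i * m i))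
    (I : Finset (Fin k)) (hI : I = Finset.univ.filter fun i => v (ℓ i * m i) = γ)
    (j : Fin k) (hj : j ∈ I) :
    0 < v (1 + ∑ i ∈ I.erase j, (ℓ i / ℓ j) * (m i / m j)) := by
  have hγtop : γ ≠ ⊤ := (hgt.trans_le le_top).ne
  have hvj : v (ℓ j * m j) = γ := by
    rw [hI] at hj; exact (Finset.mem_filter.mp hj).2
  have hjne : ℓ j * m j ≠ 0 := by
    intro h
    rw [h, AddValuation.map_zero] at hvj
    exact hγtop hvj.symm
  -- v of the sum over I exceeds γ
  have hIsum : γ < v (∑ i ∈ I, ℓ i * m i) := by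
    have hsplit : (∑ i ∈ I, ℓ i * m i)
        = (∑ i, ℓ i * m i) - ∑ i ∈ Finset.univ.filter (fun i => ¬ v (ℓ i * m i) = γ), ℓ i * m i := by
      rw [eq_sub_iff_add_eq, hI, Finset.sum_filter_add_sum_filter_not]
    have hcompl : γ < v (∑ i ∈ Finset.univ.filter (fun i => ¬ v (ℓ i * m i) = γ), ℓ i * m i) := by
      refine v.map_lt_sum hγtop fun i hi => ?_
      have hge : γ ≤ v (ℓ i * m i) := by
        rw [hγ]; exact Finset.inf_le (Finset.mem_univ i)
      exact lt_of_le_of_ne hge fun h => (Finset.mem_filter.mp hi).2 h.symm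
    rw [hsplit, sub_eq_add_neg]
    refine v.map_lt_add hgt ?_
    rwa [AddValuation.map_neg]
  -- rewrite the expression as (∑ i ∈ I, ℓ i m i) / (ℓ j m j)
  have hexpr : 1 + ∑ i ∈ I.erase j, (ℓ i / ℓ j) * (m i / m j)
      = (∑ i ∈ I, ℓ i * m i) / (ℓ j * m j) := by
    rw [← Finset.add_sum_erase I (fun i => ℓ i * m i) hj, add_div, div_self hjne]
    congr 1
    rw [Finset.sum_div]
    refine Finset.sum_congr rfl fun i _ => ?_
    rw [div_mul_div_comm]
  rw [hexpr, AddValuation.map_div, hvj]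
  by_contra h
  push_neg at h
  have h2 : v (∑ i ∈ I, ℓ i * m i) - γ + γ ≤ 0 + γ := add_le_add_left h γ
  rw [zero_add] at h2
  have h3 : v (∑ i ∈ I, ℓ i * m i) - γ + γ = v (∑ i ∈ I, ℓ i * m i) := by
    rw [sub_eq_add_neg, add_assoc, add_comm (-γ) γ,
      LinearOrderedAddCommGroupWithTop.add_neg_cancel_of_ne_top hγtop, add_zero]
  rw [h3] at h2
  exact absurd (lt_of_lt_of_le hIsum h2) (lt_irrefl γ)

end ResidueFieldDomination
end
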